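/- arXiv:math/9808025 — 9 statements merged into one kernel-verified Lean document; each statement's English description precedes it below -/
import Mathlib

section
/- Let g be a finite-dimensional nilpotent Lie algebra with descending central series g^0 = g and g^i = [g^{i-1}, g]. Define subspaces V_i of the dual g* inductively by V_0 = {0} and V_i = {σ ∈ g* : dσ ∈ Λ²V_{i-1}}, where dσ(X,Y) = -σ[X,Y]. Then V_i is the annihilator of g^i for every i ≥ 0. -/
lemma key_span {g : Type*} [AddCommGroup g] [Module ℝ g] [FiniteDimensional ℝ g]
    (wedge : Module.Dual ℝ g → Module.Dual ℝ g → (g →ₗ[ℝ] g →ₗ[ℝ] ℝ))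
    (hwedge : ∀ u v : Module.Dual ℝ g, ∀ X Y : g,
      wedge u v X Y = u X * v Y - u Y * v X)
    (W : Submodule ℝ g) (B : g →ₗ[ℝ] g →ₗ[ℝ] ℝ)
    (halt : ∀ x y : g, B x y = - B y x)
    (hW : ∀ x : g, ∀ w ∈ W, B x w = 0) :
    B ∈ Submodule.span ℝ
      {w : g →ₗ[ℝ] g →ₗ[ℝ] ℝ | ∃ u ∈ W.dualAnnihilator, ∃ v ∈ W.dualAnnihilator, w = wedge u v} := by
  obtain ⟨W', hc⟩ := Submodule.exists_isCompl W
  let b1 := Module.finBasis ℝ W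
  let b2 := Module.finBasis ℝ W'
  let b := (b1.prod b2).map (Submodule.prodEquivOfIsCompl W W' hc)
  have hbl : ∀ i, b (Sum.inl i) ∈ W := by
    intro i
    simp only [b, Module.Basis.map_apply]
    have h0 : (b1.prod b2) (Sum.inl i) = ((b1 i : W), (0 : W')) :=
      Prod.ext (b1.prod_apply_inl_fst b2 i) (b1.prod_apply_inl_snd b2 i)
    rw [h0, Submodule.coe_prodEquivOfIsCompl']
    simp
  have hdual : ∀ j, b.dualBasis (Sum.inr j) ∈ W.dualAnnihilator := by
    intro j
    rw [Submodule.mem_dualAnnihilator]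
    intro w hw
    have hrepr : w = ∑ i, b1.repr ⟨w, hw⟩ i • (b (Sum.inl i) : g) := by
      have := b1.sum_repr ⟨w, hw⟩
      have h2 : ∀ i, (b (Sum.inl i) : g) = (b1 i : g) := by
        intro i
        simp only [b, Module.Basis.map_apply]
        have h0 : (b1.prod b2) (Sum.inl i) = ((b1 i : W), (0 : W')) :=
          Prod.ext (b1.prod_apply_inl_fst b2 i) (b1.prod_apply_inl_snd b2 i)
        rw [h0, Submodule.coe_prodEquivOfIsCompl']
        simp
      calc w = ((∑ i, b1.repr ⟨w, hw⟩ i • b1 i : W) : g) := by rw [this]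
      _ = ∑ i, b1.repr ⟨w, hw⟩ i • (b (Sum.inl i) : g) := by
          push_cast
          exact Finset.sum_congr rfl fun i _ => by rw [h2]
    rw [hrepr, map_sum]
    refine Finset.sum_eq_zero fun i _ => ?_
    rw [map_smul, Module.Basis.dualBasis_apply_self]
    simp
  have hexp : B = ∑ p : (Fin (Module.finrank ℝ W) ⊕ Fin (Module.finrank ℝ W')) ×
      (Fin (Module.finrank ℝ W) ⊕ Fin (Module.finrank ℝ W')),
      ((1/2 : ℝ) * B (b p.1) (b p.2)) • wedge (b.dualBasis p.1) (b.dualBasis p.2) := by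
    refine b.ext fun r => b.ext fun s => ?_
    simp only [LinearMap.coe_sum, Finset.sum_apply, LinearMap.smul_apply, smul_eq_mul]
    rw [Fintype.sum_prod_type]
    have : ∀ p q, wedge (b.dualBasis p) (b.dualBasis q) (b r) (b s)
        = (if r = p then 1 else 0) * (if s = q then 1 else 0)
          - (if s = p then 1 else 0) * (if r = q then 1 else 0) := by
      intro p q
      rw [hwedge, Module.Basis.dualBasis_apply_self, Module.Basis.dualBasis_apply_self,
        Module.Basis.dualBasis_apply_self, Module.Basis.dualBasis_apply_self]
    simp only [this, mul_sub, mul_ite, mul_one, mul_zero, ite_mul, zero_mul, one_mul]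
    rw [Finset.sum_comm]
    simp [Finset.sum_ite_eq, Finset.sum_ite_eq', Finset.sum_sub_distrib]
    rw [halt (b s) (b r)]
    ring
  rw [hexp]
  refine Submodule.sum_mem _ fun p _ => ?_
  obtain ⟨p1, p2⟩ := p
  rcases p1 with i | i
  · have : B (b (Sum.inl i)) (b p2) = 0 := by
      rw [halt, hW _ _ (hbl i), neg_zero]
    rw [this, mul_zero, zero_smul]; exact Submodule.zero_mem _
  · rcases p2 with j | j
    · have : B (b (Sum.inr i)) (b (Sum.inl j)) = 0 := hW _ _ (hbl j)
      rw [this, mul_zero, zero_smul]; exact Submodule.zero_mem _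
    · refine Submodule.smul_mem _ _ (Submodule.subset_span ?_)
      exact ⟨_, hdual i, _, hdual j, rfl⟩

/-- For a finite-dimensional real nilpotent Lie algebra `g`, with
`V 0 = 0` and `V (i+1) = {σ | dσ ∈ Λ² (V i)}` (where `dσ(X,Y) = -σ⁅X,Y⁆` and
`Λ² (V i)` is the span of wedges of elements of `V i` inside bilinear forms),
`V i` is the annihilator of the `i`-th term `g^i` of the descending central series. -/
theorem stmt0 {g : Type*} [LieRing g] [LieAlgebra ℝ g] [FiniteDimensional ℝ g]
    [LieRing.IsNilpotent g]
    (wedge : Module.Dual ℝ g → Module.Dual ℝ g → (g →ₗ[ℝ] g →ₗ[ℝ] ℝ))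
    (hwedge : ∀ u v : Module.Dual ℝ g, ∀ X Y : g,
      wedge u v X Y = u X * v Y - u Y * v X)
    (dCE : Module.Dual ℝ g → (g →ₗ[ℝ] g →ₗ[ℝ] ℝ))
    (hd : ∀ σ : Module.Dual ℝ g, ∀ X Y : g, dCE σ X Y = -σ ⁅X, Y⁆)
    (V : ℕ → Submodule ℝ (Module.Dual ℝ g))
    (hV0 : V 0 = ⊥)
    (hVsucc : ∀ i : ℕ, ∀ σ : Module.Dual ℝ g, σ ∈ V (i + 1) ↔
      dCE σ ∈ Submodule.span ℝ
        {w : g →ₗ[ℝ] g →ₗ[ℝ] ℝ | ∃ u ∈ V i, ∃ v ∈ V i, w = wedge u v}) :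
    ∀ i : ℕ, V i =
      Submodule.dualAnnihilator
        ((LieModule.lowerCentralSeries ℝ g g i : LieSubmodule ℝ g g) : Submodule ℝ g) := by
  intro i
  induction i with
  | zero =>
    rw [hV0, LieModule.lowerCentralSeries_zero]
    rw [LieIdeal.toLieSubalgebra_toSubmodule, LieSubmodule.top_toSubmodule,
      Submodule.dualAnnihilator_top]
  | succ i ih =>
    have hlcs : ((LieModule.lowerCentralSeries ℝ g g (i + 1) : LieSubmodule ℝ g g) :
        Submodule ℝ g) = Submodule.span ℝ
          {m : g | ∃ (x : (⊤ : LieIdeal ℝ g)) (n : LieModule.lowerCentralSeries ℝ g g i),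
            ⁅(x : g), (n : g)⁆ = m} := by
      rw [LieModule.lowerCentralSeries_succ, LieIdeal.toLieSubalgebra_toSubmodule,
        LieSubmodule.lieIdeal_oper_eq_linear_span]
    ext σ
    rw [hVsucc, ih]
    constructor
    · intro hσ
      rw [Submodule.mem_dualAnnihilator]
      intro w hw
      rw [hlcs] at hw
      have hsub : Submodule.span ℝ
          {m : g | ∃ (x : (⊤ : LieIdeal ℝ g)) (n : LieModule.lowerCentralSeries ℝ g g i),
            ⁅(x : g), (n : g)⁆ = m} ≤ LinearMap.ker σ := by
        rw [Submodule.span_le]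
        rintro m ⟨x, n, rfl⟩
        rw [SetLike.mem_coe, LinearMap.mem_ker]
        have hzero : dCE σ (x : g) (n : g) = 0 := by
          refine Submodule.span_induction
            (p := fun B _ => B (x : g) (n : g) = 0) ?_ ?_ ?_ ?_ hσ
          · rintro B ⟨u, hu, v, hv, rfl⟩
            rw [Submodule.mem_dualAnnihilator] at hu hv
            rw [hwedge, hu _ n.2, hv _ n.2, mul_zero, zero_mul, sub_zero]
          · simp
          · intro B C _ _ hB hC; simp [hB, hC]
          · intro c B _ hB; simp [hB]
        have := hd σ (x : g) (n : g)
        rw [hzero] at this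
        linarith [this]
      have := hsub hw
      rwa [LinearMap.mem_ker] at this
    · intro hσ
      refine key_span wedge hwedge
        ((LieModule.lowerCentralSeries ℝ g g i : LieSubmodule ℝ g g) : Submodule ℝ g)
        (dCE σ) ?_ ?_
      · intro x y
        rw [hd, hd, ← lie_skew x y, map_neg, neg_neg]
      · intro x w hw
        rw [hd]
        have hw' : w ∈ LieModule.lowerCentralSeries ℝ g g i := hw
        have hmem : ⁅x, w⁆ ∈ LieModule.lowerCentralSeries ℝ g g (i + 1) := by
          rw [LieModule.lowerCentralSeries_succ]
          exact LieSubmodule.lie_mem_lie (LieSubmodule.mem_top x) hw'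
        rw [Submodule.mem_dualAnnihilator] at hσ
        rw [hσ _ hmem, neg_zero]
end

section
/- Let g be a real Lie algebra with an integrable almost-complex structure J (satisfying the Nijenhuis condition [JX,JY] = [X,Y] + J[JX,Y] + J[X,JY]). For each i, the subspace g^i(J) = g^i + J(g^i), where g^i is the i-th term of the descending central series, is a Lie subalgebra of g. -/
/-!
Write elements of `I + J(I)` as `a + J a'` and `b + J b'` with `a, a', b, b'` in the ideal `I`.
The integrability condition rewrites the only dangerous term `⁅J a', J b'⁆` as
`⁅a', b'⁆ + J (⁅J a', b'⁆ + ⁅a', J b'⁆)`, so the bracket splits into a sum of brackets with an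
element of `I`, which lies in `I`, plus `J` of such a sum; this works for any Lie ideal `I`.
-/

namespace LieIdeal

variable {R L : Type*} [CommRing R] [LieRing L] [LieAlgebra R L]

theorem lie_add_map_add_map_eq {J : L →ₗ[R] L}
    (hint : ∀ X Y : L, ⁅J X, J Y⁆ = ⁅X, Y⁆ + J ⁅J X, Y⁆ + J ⁅X, J Y⁆) (a a' b b' : L) :
    ⁅a + J a', b + J b'⁆ =
      (⁅a, b⁆ + ⁅a, J b'⁆ + ⁅J a', b⁆ + ⁅a', b'⁆) + J (⁅J a', b'⁆ + ⁅a', J b'⁆) := by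
  rw [add_lie, lie_add, lie_add, hint, map_add]
  abel

def supMapOfIntegrable (I : LieIdeal R L) (J : L →ₗ[R] L)
    (hint : ∀ X Y : L, ⁅J X, J Y⁆ = ⁅X, Y⁆ + J ⁅J X, Y⁆ + J ⁅X, J Y⁆) : LieSubalgebra R L where
  toSubmodule := (I : Submodule R L) ⊔ (I : Submodule R L).map J
  lie_mem' {x y} hx hy := by
    obtain ⟨a, ha, _, ⟨a', ha', rfl⟩, rfl⟩ := Submodule.mem_sup.mp hx
    obtain ⟨b, hb, _, ⟨b', hb', rfl⟩, rfl⟩ := Submodule.mem_sup.mp hy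
    rw [lie_add_map_add_map_eq hint]
    refine Submodule.add_mem _ (Submodule.mem_sup_left ?_)
      (Submodule.mem_sup_right (Submodule.mem_map_of_mem ?_))
    · exact add_mem (add_mem (add_mem (lie_mem_left R L I a b ha)
        (lie_mem_left R L I a _ ha)) (lie_mem_right R L I _ b hb)) (lie_mem_left R L I a' b' ha')
    · exact add_mem (lie_mem_right R L I _ b' hb') (lie_mem_left R L I a' _ ha')

end LieIdeal

theorem stmt3_general {g : Type*} [LieRing g] [LieAlgebra ℝ g] (J : g →ₗ[ℝ] g)
    (hint : ∀ X Y : g, ⁅J X, J Y⁆ = ⁅X, Y⁆ + J ⁅J X, Y⁆ + J ⁅X, J Y⁆) (i : ℕ) :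
    ∃ h : LieSubalgebra ℝ g, h.toSubmodule =
      ((LieModule.lowerCentralSeries ℝ g g i : LieSubmodule ℝ g g) : Submodule ℝ g) ⊔
        Submodule.map J
          ((LieModule.lowerCentralSeries ℝ g g i : LieSubmodule ℝ g g) : Submodule ℝ g) :=
  ⟨LieIdeal.supMapOfIntegrable (LieModule.lowerCentralSeries ℝ g g i) J hint, rfl⟩

/-- If `J` is an integrable almost-complex structure on a real Lie
algebra `g`, then for every `i` the subspace `g^i + J(g^i)` (where `g^i` is the
`i`-th term of the descending central series) is a Lie subalgebra of `g`. -/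
theorem stmt3 {g : Type*} [LieRing g] [LieAlgebra ℝ g] (J : g →ₗ[ℝ] g)
    (hJ2 : ∀ X : g, J (J X) = -X)
    (hint : ∀ X Y : g, ⁅J X, J Y⁆ = ⁅X, Y⁆ + J ⁅J X, Y⁆ + J ⁅X, J Y⁆) (i : ℕ) :
    ∃ h : LieSubalgebra ℝ g, h.toSubmodule =
      ((LieModule.lowerCentralSeries ℝ g g i : LieSubmodule ℝ g g) : Submodule ℝ g) ⊔
        Submodule.map J
          ((LieModule.lowerCentralSeries ℝ g g i : LieSubmodule ℝ g g) : Submodule ℝ g) :=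
  stmt3_general J hint i
end

section
/- In ℝ⁴ with standard dual basis e¹,e²,e³,e⁴, let a,b,c ∈ ℝ with a ≠ 0, and consider the 3-dimensional subspace Λ = span{e¹∧e² + e³∧e⁴, e¹∧e³ + e⁴∧e², a·e¹∧e⁴ + b·e⁴∧e² + c·e²∧e³} of Λ²(ℝ⁴)*. Then the bilinear form φ defined by ξ ∧ η = φ(ξ,η)·e¹∧e²∧e³∧e⁴ restricts to a positive definite form on Λ if and only if b² - 4ac < 0. -/
open ExteriorAlgebra

private lemma stmt11_swap' {M : Type*} [AddCommGroup M] [Module ℝ M]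
    (v w : M) (x : ExteriorAlgebra ℝ M) :
    ι ℝ w * (ι ℝ v * x) = -(ι ℝ v * (ι ℝ w * x)) := by
  rw [← mul_assoc, eq_neg_of_add_eq_zero_right (ι_add_mul_swap v w), neg_mul, mul_assoc]

private lemma stmt11_swap {M : Type*} [AddCommGroup M] [Module ℝ M] (v w : M) :
    ι ℝ w * ι ℝ v = -(ι ℝ v * ι ℝ w) :=
  eq_neg_of_add_eq_zero_right (ι_add_mul_swap v w)

private lemma stmt11_sq' {M : Type*} [AddCommGroup M] [Module ℝ M]
    (v : M) (x : ExteriorAlgebra ℝ M) : ι ℝ v * (ι ℝ v * x) = 0 := by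
  rw [← mul_assoc, ι_sq_zero, zero_mul]

private lemma stmt11_qkey {M : Type*} [AddCommGroup M] [Module ℝ M]
    (v : Fin 4 → M) (a b c x y z : ℝ) :
    (x • (ι ℝ (v 0) * ι ℝ (v 1) + ι ℝ (v 2) * ι ℝ (v 3)) +
      (y • (ι ℝ (v 0) * ι ℝ (v 2) + ι ℝ (v 3) * ι ℝ (v 1)) +
       z • (a • (ι ℝ (v 0) * ι ℝ (v 3)) + b • (ι ℝ (v 3) * ι ℝ (v 1))
         + c • (ι ℝ (v 1) * ι ℝ (v 2))))) *
    (x • (ι ℝ (v 0) * ι ℝ (v 1) + ι ℝ (v 2) * ι ℝ (v 3)) +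
      (y • (ι ℝ (v 0) * ι ℝ (v 2) + ι ℝ (v 3) * ι ℝ (v 1)) +
       z • (a • (ι ℝ (v 0) * ι ℝ (v 3)) + b • (ι ℝ (v 3) * ι ℝ (v 1))
         + c • (ι ℝ (v 1) * ι ℝ (v 2))))) =
    (2*x^2 + 2*y^2 + 2*a*c*z^2 + 2*b*y*z) •
      (ι ℝ (v 0) * ι ℝ (v 1) * ι ℝ (v 2) * ι ℝ (v 3)) := by
  simp only [mul_add, add_mul, smul_mul_assoc, mul_smul_comm, smul_add, smul_smul,
    mul_assoc, stmt11_swap' (v 0) (v 1), stmt11_swap' (v 0) (v 2), stmt11_swap' (v 0) (v 3),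
    stmt11_swap' (v 1) (v 2), stmt11_swap' (v 1) (v 3), stmt11_swap' (v 2) (v 3),
    stmt11_swap (v 0) (v 1), stmt11_swap (v 0) (v 2), stmt11_swap (v 0) (v 3),
    stmt11_swap (v 1) (v 2), stmt11_swap (v 1) (v 3), stmt11_swap (v 2) (v 3),
    stmt11_sq' (v 0), stmt11_sq' (v 1), stmt11_sq' (v 2), stmt11_sq' (v 3),
    ι_sq_zero, mul_neg, neg_mul, smul_neg, neg_neg, mul_zero, zero_mul, smul_zero,
    add_zero, zero_add, neg_zero]
  module

private lemma stmt11_keyZ {M : Type*} [AddCommGroup M] [Module ℝ M]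
    (v : Fin 4 → M) (a b c x y z : ℝ) :
    (x • (ι ℝ (v 0) * ι ℝ (v 1) + ι ℝ (v 2) * ι ℝ (v 3)) +
      (y • (ι ℝ (v 0) * ι ℝ (v 2) + ι ℝ (v 3) * ι ℝ (v 1)) +
       z • (a • (ι ℝ (v 0) * ι ℝ (v 3)) + b • (ι ℝ (v 3) * ι ℝ (v 1))
         + c • (ι ℝ (v 1) * ι ℝ (v 2))))) * (ι ℝ (v 1) * ι ℝ (v 2)) =
    (a * z) • (ι ℝ (v 0) * ι ℝ (v 1) * ι ℝ (v 2) * ι ℝ (v 3)) := by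
  simp only [mul_add, add_mul, smul_mul_assoc, mul_smul_comm, smul_add, smul_smul,
    mul_assoc, stmt11_swap' (v 0) (v 1), stmt11_swap' (v 0) (v 2), stmt11_swap' (v 0) (v 3),
    stmt11_swap' (v 1) (v 2), stmt11_swap' (v 1) (v 3), stmt11_swap' (v 2) (v 3),
    stmt11_swap (v 0) (v 1), stmt11_swap (v 0) (v 2), stmt11_swap (v 0) (v 3),
    stmt11_swap (v 1) (v 2), stmt11_swap (v 1) (v 3), stmt11_swap (v 2) (v 3),
    stmt11_sq' (v 0), stmt11_sq' (v 1), stmt11_sq' (v 2), stmt11_sq' (v 3),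
    ι_sq_zero, mul_neg, neg_mul, smul_neg, neg_neg, mul_zero, zero_mul, smul_zero,
    add_zero, zero_add, neg_zero]
  module

private lemma stmt11_omega_ne {M : Type*} [AddCommGroup M] [Module ℝ M]
    (e : Module.Basis (Fin 4) ℝ M) :
    ι ℝ (e 0) * ι ℝ (e 1) * ι ℝ (e 2) * ι ℝ (e 3) ≠ 0 := by
  intro h
  have hmulti : ι ℝ (e 0) * ι ℝ (e 1) * ι ℝ (e 2) * ι ℝ (e 3) =
      ιMulti ℝ 4 ![e 0, e 1, e 2, e 3] := by
    rw [ιMulti_apply]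
    simp [List.ofFn_succ, mul_assoc]
  classical
  set f : ∀ i, M [⋀^Fin i]→ₗ[ℝ] ℝ := fun i =>
    if h : i = 4 then h ▸ (e.det : M [⋀^Fin 4]→ₗ[ℝ] ℝ) else 0 with hf
  have h1 : liftAlternating (R := ℝ) (M := M) (N := ℝ) f
      (ι ℝ (e 0) * ι ℝ (e 1) * ι ℝ (e 2) * ι ℝ (e 3)) = 1 := by
    rw [hmulti, liftAlternating_apply_ιMulti]
    have hf4 : f 4 = e.det := by simp [hf]
    rw [hf4]
    have hb : ![e 0, e 1, e 2, e 3] = ⇑e := by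
      funext i; fin_cases i <;> rfl
    rw [hb, Module.Basis.det_self]
  rw [h, map_zero] at h1
  exact zero_ne_one h1

set_option maxHeartbeats 1000000 in
/-- In `ℝ⁴` with standard dual basis `e¹,…,e⁴`, the subspace
`Λ = ⟨e¹∧e² + e³∧e⁴, e¹∧e³ + e⁴∧e², a e¹∧e⁴ + b e⁴∧e² + c e²∧e³⟩` of `Λ²(ℝ⁴)*`
is positive definite for the wedge-pairing `ξ ∧ η = φ(ξ,η) e¹∧e²∧e³∧e⁴`
iff `b² - 4ac < 0`. -/
theorem stmt11 (a b c : ℝ) (ha : a ≠ 0)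
    (e : Module.Basis (Fin 4) ℝ (Module.Dual ℝ (Fin 4 → ℝ)))
    (he : e = (Pi.basisFun ℝ (Fin 4)).dualBasis)
    (Λ : Submodule ℝ (ExteriorAlgebra ℝ (Module.Dual ℝ (Fin 4 → ℝ))))
    (hΛ : Λ = Submodule.span ℝ
      {ι ℝ (e 0) * ι ℝ (e 1) + ι ℝ (e 2) * ι ℝ (e 3),
       ι ℝ (e 0) * ι ℝ (e 2) + ι ℝ (e 3) * ι ℝ (e 1),
       a • (ι ℝ (e 0) * ι ℝ (e 3)) + b • (ι ℝ (e 3) * ι ℝ (e 1))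
         + c • (ι ℝ (e 1) * ι ℝ (e 2))}) :
    (∀ ξ ∈ Λ, ξ ≠ 0 → ∃ r : ℝ, 0 < r ∧
        ξ * ξ = r • (ι ℝ (e 0) * ι ℝ (e 1) * ι ℝ (e 2) * ι ℝ (e 3))) ↔
      b ^ 2 - 4 * a * c < 0 := by
  set u1 := ι ℝ (e 0) * ι ℝ (e 1) + ι ℝ (e 2) * ι ℝ (e 3) with hu1
  set u2 := ι ℝ (e 0) * ι ℝ (e 2) + ι ℝ (e 3) * ι ℝ (e 1) with hu2
  set u3 := a • (ι ℝ (e 0) * ι ℝ (e 3)) + b • (ι ℝ (e 3) * ι ℝ (e 1))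
      + c • (ι ℝ (e 1) * ι ℝ (e 2)) with hu3
  set ω := ι ℝ (e 0) * ι ℝ (e 1) * ι ℝ (e 2) * ι ℝ (e 3) with hω
  have hωne : ω ≠ 0 := stmt11_omega_ne e
  have hq := stmt11_qkey (fun i => e i) a b c
  have hkz := stmt11_keyZ (fun i => e i) a b c
  simp only [← hu1, ← hu2, ← hu3, ← hω] at hq hkz
  constructor
  · intro h
    by_contra hcon
    push_neg at hcon
    have hmem : (0:ℝ) • u1 + ((-(b/2)) • u2 + (1:ℝ) • u3) ∈ Λ := by
      rw [hΛ]
      refine Submodule.add_mem _ (Submodule.smul_mem _ _ ?_)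
        (Submodule.add_mem _ (Submodule.smul_mem _ _ ?_) (Submodule.smul_mem _ _ ?_)) <;>
        apply Submodule.subset_span <;> simp
    have hne : (0:ℝ) • u1 + ((-(b/2)) • u2 + (1:ℝ) • u3) ≠ 0 := by
      intro h0
      have hth := hkz 0 (-(b/2)) 1
      rw [h0, zero_mul] at hth
      have ha1 : a * 1 ≠ 0 := by simpa using ha
      exact hωne (by rw [← inv_smul_smul₀ ha1 ω, ← hth, smul_zero])
    obtain ⟨r, hr, hsq⟩ := h _ hmem hne
    have heq : r • ω = (2*0^2 + 2*(-(b/2))^2 + 2*a*c*1^2 + 2*b*(-(b/2))*1) • ω := by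
      rw [← hsq, hq 0 (-(b/2)) 1]
    have hreq : r = 2*0^2 + 2*(-(b/2))^2 + 2*a*c*1^2 + 2*b*(-(b/2))*1 := by
      by_contra hne'
      have hsub : r - (2*0^2 + 2*(-(b/2))^2 + 2*a*c*1^2 + 2*b*(-(b/2))*1) ≠ 0 :=
        sub_ne_zero.mpr hne'
      have h0 : (r - (2*0^2 + 2*(-(b/2))^2 + 2*a*c*1^2 + 2*b*(-(b/2))*1)) • ω = 0 := by
        rw [sub_smul, heq, sub_self]
      exact hωne (by rw [← inv_smul_smul₀ hsub ω, h0, smul_zero])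
    nlinarith [hreq, hr, hcon]
  · intro hd ξ hmem hne
    rw [hΛ] at hmem
    rcases Submodule.mem_span_insert.mp hmem with ⟨x, w, hw, rfl⟩
    rcases Submodule.mem_span_insert.mp hw with ⟨y, w2, hw2, rfl⟩
    rcases Submodule.mem_span_singleton.mp hw2 with ⟨z, rfl⟩
    refine ⟨2*x^2 + 2*y^2 + 2*a*c*z^2 + 2*b*y*z, ?_, hq x y z⟩
    rcases lt_or_ge 0 (2*x^2 + 2*y^2 + 2*a*c*z^2 + 2*b*y*z) with hr | hr
    · exact hr
    · exfalso
      have h4 : 0 < 4*a*c - b^2 := by nlinarith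
      have hx : x = 0 := by
        have : x^2 ≤ 0 := by
          nlinarith [sq_nonneg (2*y + b*z), mul_nonneg h4.le (sq_nonneg z)]
        exact pow_eq_zero_iff (n := 2) (by norm_num) |>.mp (le_antisymm this (sq_nonneg x))
      have hz : z = 0 := by
        by_contra hz0
        have hzz : 0 < z^2 := by positivity
        nlinarith [sq_nonneg (2*y + b*z), sq_nonneg x, mul_pos h4 hzz]
      subst hx
      subst hz
      have hy : y = 0 := by
        have hy2 : y^2 ≤ 0 := by nlinarith
        exact pow_eq_zero_iff (n := 2) (by norm_num) |>.mp (le_antisymm hy2 (sq_nonneg y))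
      apply hne
      rw [hy]
      simp
end

section
/- Let g be a 4-dimensional real nilpotent Lie algebra admitting an integrable almost-complex structure J (satisfying [JX,JY] = [X,Y] + J[JX,Y] + J[X,JY]). Then g is isomorphic either to the abelian Lie algebra ℝ⁴ or to the Lie algebra with basis e₁,e₂,e₃,e₄ whose only nonzero bracket is [e₁,e₂] = -e₄ (i.e. the Lie algebra given in dual form by de¹=de²=de³=0, de⁴=e¹∧e²). -/
open Module

namespace Stmt12

set_option linter.unusedSectionVars false

variable {g : Type*} [LieRing g] [LieAlgebra ℝ g] [FiniteDimensional ℝ g]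

/-- The center of `g`, as a plain submodule. -/
def zc (g : Type*) [LieRing g] [LieAlgebra ℝ g] : Submodule ℝ g where
  carrier := {x | ∀ y : g, ⁅x, y⁆ = 0}
  add_mem' := fun {a b} ha hb => fun y => by rw [add_lie, ha y, hb y, add_zero]
  zero_mem' := fun y => zero_lie y
  smul_mem' := fun c a ha => fun y => by rw [smul_lie, ha y, smul_zero]

lemma mem_zc {x : g} : x ∈ zc g ↔ ∀ y : g, ⁅x, y⁆ = 0 := Iff.rfl

lemma nil_fix [LieRing.IsNilpotent g] {N : LieIdeal ℝ g}
    (h : ⁅(⊤ : LieIdeal ℝ g), N⁆ = N) : N = ⊥ := by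
  have key : ∀ k, N ≤ LieModule.lowerCentralSeries ℝ g g k := by
    intro k
    induction k with
    | zero => exact le_top
    | succ k ih =>
        rw [LieModule.lowerCentralSeries_succ]
        exact le_trans (le_of_eq h.symm) (LieSubmodule.mono_lie_right _ ih)
  obtain ⟨k, hk⟩ := LieModule.IsNilpotent.nilpotent (R := ℝ) (L := g) (M := g)
  exact le_bot_iff.mp (hk ▸ key k)

lemma pair_indep (J : g →ₗ[ℝ] g) (hJ2 : ∀ X : g, J (J X) = -X) {w : g} (hw : w ≠ 0) :
    LinearIndependent ℝ ![w, J w] := by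
  rw [LinearIndependent.pair_iff]
  intro s t hst
  have h2 : s • J w - t • w = 0 := by
    have := congrArg J hst
    simpa [map_add, map_smul, hJ2, smul_neg, sub_eq_add_neg] using this
  have e1 : (s * s) • w + (s * t) • J w = 0 := by
    have := congrArg (fun x => s • x) hst
    simpa [smul_add, smul_smul] using this
  have e2 : (t * s) • J w - (t * t) • w = 0 := by
    have := congrArg (fun x => t • x) h2
    simpa [smul_sub, smul_smul] using this
  have e3 : (s * s + t * t) • w = 0 := by
    have : (s * s) • w + (s * t) • J w - ((t * s) • J w - (t * t) • w)
        = (s * s + t * t) • w := by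
      rw [add_smul]; rw [mul_comm t s]; abel
    rw [← this, e1, e2, sub_zero]
  rcases smul_eq_zero.mp e3 with h | h
  · constructor <;> nlinarith [sq_nonneg s, sq_nonneg t]
  · exact absurd h hw

lemma derived_small (hdim : finrank ℝ g = 4) (hz : 2 ≤ finrank ℝ (zc g)) :
    finrank ℝ (LieSubmodule.toSubmodule (⁅(⊤ : LieIdeal ℝ g), (⊤ : LieIdeal ℝ g)⁆ : LieIdeal ℝ g)) ≤ 1 := by
  obtain ⟨W, hW⟩ := Submodule.exists_isCompl (zc g)
  have hWfin : finrank ℝ W ≤ 2 := by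
    have h4 := Submodule.finrank_add_eq_of_isCompl hW
    rw [hdim] at h4
    omega
  set m := finrank ℝ W with hm
  let b : Basis (Fin m) ℝ W := Module.finBasis ℝ W
  let fW : Fin 2 → W := fun i => if h : (i : ℕ) < m then b ⟨(i : ℕ), h⟩ else 0
  set u : g := (fW 0 : g) with hu
  set v : g := (fW 1 : g) with hv
  have hWspan : ∀ x : W, x ∈ Submodule.span ℝ ({fW 0, fW 1} : Set W) := by
    intro x
    have hbs : Submodule.span ℝ (Set.range ⇑b) = ⊤ := b.span_eq
    have hsub : Set.range ⇑b ⊆ ({fW 0, fW 1} : Set W) := by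
      rintro _ ⟨j, rfl⟩
      have hj2 : (j : ℕ) < 2 := lt_of_lt_of_le j.2 hWfin
      have : fW ⟨(j : ℕ), hj2⟩ = b j := by
        simp only [fW]
        rw [dif_pos j.2]
      have hj01 : (j : ℕ) = 0 ∨ (j : ℕ) = 1 := by omega
      rcases hj01 with h0 | h1
      · left; rw [← this]; congr 1; ext; simp [h0]
      · right; rw [← this]; simp only [Set.mem_singleton_iff]; congr 1; ext; simp [h1]
    have : x ∈ Submodule.span ℝ (Set.range ⇑b) := by rw [hbs]; trivial
    exact Submodule.span_mono hsub this
  have hdecomp : ∀ x : g, ∃ a c : ℝ, x - a • u - c • v ∈ zc g := by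
    intro x
    have hx : x ∈ zc g ⊔ W := by rw [hW.codisjoint.eq_top]; trivial
    obtain ⟨z, hzmem, ww, hwwmem, hzw⟩ := Submodule.mem_sup.mp hx
    obtain ⟨a, c, hac⟩ := Submodule.mem_span_pair.mp (hWspan ⟨ww, hwwmem⟩)
    refine ⟨a, c, ?_⟩
    have hcoe : a • u + c • v = ww := by
      have := congrArg (Subtype.val) hac
      simpa [hu, hv] using this
    have : x - a • u - c • v = z := by rw [← hzw, ← hcoe]; abel
    rw [this]; exact hzmem
  have hgen : ∀ x y : g, ⁅x, y⁆ ∈ Submodule.span ℝ ({⁅u, v⁆} : Set g) := by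
    intro x y
    obtain ⟨a, c, hz⟩ := hdecomp x
    obtain ⟨a', c', hz'⟩ := hdecomp y
    set z := x - a • u - c • v with hzdef
    set z' := y - a' • u - c' • v with hz'def
    have hx : x = a • u + c • v + z := by rw [hzdef]; abel
    have hy : y = a' • u + c' • v + z' := by rw [hz'def]; abel
    have hzl : ∀ t : g, ⁅z, t⁆ = 0 := hz
    have hz'l : ∀ t : g, ⁅z', t⁆ = 0 := hz'
    have hzr : ∀ t : g, ⁅t, z⁆ = 0 := fun t => by rw [← lie_skew, hzl t, neg_zero]
    have hz'r : ∀ t : g, ⁅t, z'⁆ = 0 := fun t => by rw [← lie_skew, hz'l t, neg_zero]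
    have hexp : ⁅x, y⁆ = (a * c' - c * a') • ⁅u, v⁆ := by
      rw [hx, hy]
      simp only [add_lie, lie_add, smul_lie, lie_smul, lie_self, smul_zero,
        hzl, hz'r, hzr, smul_smul]
      rw [show ⁅v, u⁆ = -⁅u, v⁆ from by rw [← lie_skew]]
      rw [sub_smul]
      module
    rw [hexp]
    exact Submodule.smul_mem _ _ (Submodule.mem_span_singleton_self _)
  have hle : (LieSubmodule.toSubmodule (⁅(⊤ : LieIdeal ℝ g), (⊤ : LieIdeal ℝ g)⁆ : LieIdeal ℝ g))
      ≤ Submodule.span ℝ ({⁅u, v⁆} : Set g) := by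
    rw [LieSubmodule.lieIdeal_oper_eq_linear_span']
    apply Submodule.span_le.mpr
    rintro w ⟨x, -, y, -, rfl⟩
    exact hgen x y
  calc finrank ℝ (LieSubmodule.toSubmodule (⁅(⊤ : LieIdeal ℝ g), (⊤ : LieIdeal ℝ g)⁆ : LieIdeal ℝ g))
      ≤ finrank ℝ (Submodule.span ℝ ({⁅u, v⁆} : Set g)) := Submodule.finrank_mono hle
    _ ≤ 1 := by
        by_cases h : ⁅u, v⁆ = (0 : g)
        · rw [h, Submodule.span_zero_singleton]
          simp
        · rw [finrank_span_singleton h]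

end Stmt12

open Stmt12 Module

set_option maxHeartbeats 2000000 in
/-- A 4-dimensional real nilpotent Lie algebra admitting an
integrable almost-complex structure is either abelian (i.e. isomorphic to `ℝ⁴`)
or has a basis `e₁,…,e₄` whose only nonzero bracket is `⁅e₁,e₂⁆ = -e₄`
(dually `de⁴ = e¹∧e²`). -/
theorem stmt12 {g : Type*} [LieRing g] [LieAlgebra ℝ g] [FiniteDimensional ℝ g]
    [LieRing.IsNilpotent g] (hdim : Module.finrank ℝ g = 4)
    (J : g →ₗ[ℝ] g) (hJ2 : ∀ X : g, J (J X) = -X)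
    (hint : ∀ X Y : g, ⁅J X, J Y⁆ = ⁅X, Y⁆ + J ⁅J X, Y⁆ + J ⁅X, J Y⁆) :
    IsLieAbelian g ∨
      ∃ e : Module.Basis (Fin 4) ℝ g,
        ⁅e 0, e 1⁆ = -e 3 ∧ ⁅e 0, e 2⁆ = 0 ∧ ⁅e 0, e 3⁆ = 0 ∧
        ⁅e 1, e 2⁆ = 0 ∧ ⁅e 1, e 3⁆ = 0 ∧ ⁅e 2, e 3⁆ = 0 := by
  by_cases hab : IsLieAbelian g
  · exact Or.inl hab
  right
  classical
  have hskw : ∀ p q : g, ⁅p, q⁆ = -⁅q, p⁆ := fun p q => by rw [← lie_skew]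
  set D : LieIdeal ℝ g := ⁅(⊤ : LieIdeal ℝ g), (⊤ : LieIdeal ℝ g)⁆ with hDdef
  set E : LieIdeal ℝ g := ⁅(⊤ : LieIdeal ℝ g), D⁆ with hEdef
  have hmemD : ∀ x y : g, ⁅x, y⁆ ∈ D.toSubmodule := fun x y =>
    (LieSubmodule.mem_toSubmodule _).mpr
      (LieSubmodule.lie_mem_lie (LieSubmodule.mem_top x) (LieSubmodule.mem_top y))
  have hmemE : ∀ (x z : g), z ∈ D.toSubmodule → ⁅x, z⁆ ∈ E.toSubmodule := fun x z hz =>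
    (LieSubmodule.mem_toSubmodule _).mpr
      (LieSubmodule.lie_mem_lie (LieSubmodule.mem_top x) ((LieSubmodule.mem_toSubmodule _).mp hz))
  have hDne : D ≠ ⊥ := by
    intro h
    refine hab ⟨fun x y => ?_⟩
    have := hmemD x y
    rw [h] at this
    simpa using this
  have hEleD : E ≤ D := LieSubmodule.lie_le_right D ⊤
  have hEneD : E ≠ D := by
    intro h
    apply hDne
    apply nil_fix (N := D)
    rw [← hEdef]
    exact h
  have hEltD : E.toSubmodule < D.toSubmodule :=
    lt_of_le_of_ne ((LieSubmodule.toSubmodule_le_toSubmodule _ _).mpr hEleD)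
      (fun h => hEneD (LieSubmodule.toSubmodule_injective h))
  have hn4 : finrank ℝ D.toSubmodule ≤ 4 := hdim ▸ Submodule.finrank_le _
  have hn0 : finrank ℝ D.toSubmodule ≠ 0 := by
    intro h
    apply hDne
    apply LieSubmodule.toSubmodule_injective
    rw [Submodule.finrank_eq_zero.mp h, LieSubmodule.bot_toSubmodule]
  have hrank : finrank ℝ D.toSubmodule = 1 ∨ finrank ℝ D.toSubmodule = 2 ∨
      3 ≤ finrank ℝ D.toSubmodule := by omega
  rcases hrank with hn | hn | hn3
  · -- dimension 1 : construct the basis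
    have hn1 : finrank ℝ D.toSubmodule = 1 := hn
    have hEbot : E.toSubmodule = ⊥ := by
      have := Submodule.finrank_lt_finrank_of_lt hEltD
      exact Submodule.finrank_eq_zero.mp (by omega)
    obtain ⟨w0, hw0ne, hw0span⟩ := finrank_eq_one_iff'.mp hn1
    set w : g := (w0 : g) with hwdef
    have hwne : w ≠ 0 := fun h => hw0ne (Subtype.ext h)
    have hwD : w ∈ D.toSubmodule := w0.2
    have hDspan : ∀ z, z ∈ D.toSubmodule → ∃ c : ℝ, z = c • w := by
      intro z hz
      obtain ⟨c, hc⟩ := hw0span ⟨z, hz⟩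
      refine ⟨c, ?_⟩
      have := congrArg Subtype.val hc
      simpa [hwdef] using this.symm
    have hwcen : ∀ t : g, ⁅t, w⁆ = 0 := by
      intro t
      have h1 := hmemE t w hwD
      rw [hEbot] at h1
      simpa using h1
    have hwcen' : ∀ t : g, ⁅w, t⁆ = 0 := fun t => by rw [hskw, hwcen, neg_zero]
    obtain ⟨f0, hf0⟩ : ∃ φ : Module.Dual ℝ g, φ w ≠ 0 := by
      by_contra h
      push_neg at h
      exact hwne ((Module.forall_dual_apply_eq_zero_iff ℝ w).mp h)
    set f : Module.Dual ℝ g := (f0 w)⁻¹ • f0 with hfdef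
    have hfw : f w = 1 := by
      rw [hfdef]
      simp [inv_mul_cancel₀ hf0]
    have hrep : ∀ x y : g, ⁅x, y⁆ = f ⁅x, y⁆ • w := by
      intro x y
      obtain ⟨c, hc⟩ := hDspan _ (hmemD x y)
      rw [hc, map_smul, smul_eq_mul, hfw, mul_one]
    obtain ⟨x0, y0, hxy0⟩ : ∃ x y : g, ⁅x, y⁆ ≠ 0 := by
      by_contra h
      push_neg at h
      exact hab ⟨h⟩
    set e0 : g := x0 with he0
    have hc0 : f ⁅x0, y0⁆ ≠ 0 := by
      intro h
      apply hxy0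
      rw [hrep x0 y0, h, zero_smul]
    set c0 : ℝ := f ⁅x0, y0⁆ with hc0def
    have hb0 : ⁅x0, y0⁆ = c0 • w := by rw [hc0def]; exact hrep x0 y0
    set e1 : g := (-(c0⁻¹)) • y0 with he1
    have h01 : ⁅e0, e1⁆ = -w := by
      rw [he1, lie_smul, he0, hb0, smul_smul, neg_mul, inv_mul_cancel₀ hc0,
        neg_smul, one_smul]
    have hw01 : f ⁅e0, e1⁆ = -1 := by rw [h01, map_neg, hfw]
    have hw10 : f ⁅e1, e0⁆ = 1 := by rw [hskw e1 e0, map_neg, hw01, neg_neg]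
    have hself : ∀ t : g, f ⁅t, t⁆ = 0 := fun t => by rw [lie_self, map_zero]
    have hfw0 : ∀ t, f ⁅w, t⁆ = 0 := fun t => by rw [hwcen', map_zero]
    have hfw0' : ∀ t, f ⁅t, w⁆ = 0 := fun t => by rw [hwcen, map_zero]
    have hskf : ∀ p q : g, f ⁅p, q⁆ = - f ⁅q, p⁆ := fun p q => by rw [hskw p q, map_neg]
    have hkey : ∀ x y : g, f ⁅x, e0⁆ = 0 → f ⁅x, e1⁆ = 0 → f ⁅y, e0⁆ = 0 → f ⁅y, e1⁆ = 0 →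
        f ⁅x, y⁆ = 0 := by
      intro x y hx0 hx1 hy0 hy1
      by_contra hxy
      have haux : ∀ (a b cc d : ℝ) (r : g), (∀ t, f ⁅r, t⁆ = 0) →
          a • e0 + b • e1 + cc • x + d • y = r → a = 0 ∧ b = 0 ∧ cc = 0 ∧ d = 0 := by
        intro a b cc d r hr heq
        have happ : ∀ t : g,
            a * f ⁅e0, t⁆ + b * f ⁅e1, t⁆ + cc * f ⁅x, t⁆ + d * f ⁅y, t⁆ = f ⁅r, t⁆ := by
          intro t
          have := congrArg (fun v => f ⁅v, t⁆) heq
          simpa [add_lie, smul_lie, map_add, smul_eq_mul] using this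
        have hx0' : f ⁅e0, x⁆ = 0 := by rw [hskf e0 x, hx0, neg_zero]
        have hx1' : f ⁅e1, x⁆ = 0 := by rw [hskf e1 x, hx1, neg_zero]
        have hy0' : f ⁅e0, y⁆ = 0 := by rw [hskf e0 y, hy0, neg_zero]
        have hy1' : f ⁅e1, y⁆ = 0 := by rw [hskf e1 y, hy1, neg_zero]
        have ha : a = 0 := by
          have h := happ e1
          rw [hw01, hself e1, hx1, hy1, hr e1] at h
          linarith
        have hb : b = 0 := by
          have h := happ e0
          rw [hw10, hself e0, hx0, hy0, hr e0] at h
          linarith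
        have hcc : cc = 0 := by
          have h := happ y
          rw [hy0', hy1', hself y, hr y, ha, hb] at h
          have h2 : cc * f ⁅x, y⁆ = 0 := by linarith
          rcases mul_eq_zero.mp h2 with h3 | h3
          · exact h3
          · exact absurd h3 hxy
        have hd : d = 0 := by
          have h := happ x
          rw [hx0', hx1', hself x, hskf y x, hr x, ha, hb, hcc] at h
          have h2 : d * f ⁅x, y⁆ = 0 := by linarith
          rcases mul_eq_zero.mp h2 with h3 | h3
          · exact h3
          · exact absurd h3 hxy
        exact ⟨ha, hb, hcc, hd⟩
      have hli : LinearIndependent ℝ ![e0, e1, x, y] := by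
        rw [Fintype.linearIndependent_iff]
        intro cfun hsum
        have hsum' : cfun 0 • e0 + cfun 1 • e1 + cfun 2 • x + cfun 3 • y = 0 := by
          simpa [Fin.sum_univ_four] using hsum
        obtain ⟨h0, h1, h2, h3⟩ := haux _ _ _ _ 0 (fun t => by rw [zero_lie, map_zero]) hsum'
        intro i
        fin_cases i <;> assumption
      have hcard : Fintype.card (Fin 4) = finrank ℝ g := by rw [hdim]; simp
      have hBspan : Submodule.span ℝ (Set.range ![e0, e1, x, y]) = ⊤ := by
        have hsp := (basisOfLinearIndependentOfCardEqFinrank hli hcard).span_eq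
        rwa [coe_basisOfLinearIndependentOfCardEqFinrank] at hsp
      have hwmem : w ∈ Submodule.span ℝ (Set.range ![e0, e1, x, y]) := by
        rw [hBspan]; trivial
      obtain ⟨cf, hcf⟩ := (Submodule.mem_span_range_iff_exists_fun ℝ).mp hwmem
      have hcf' : cf 0 • e0 + cf 1 • e1 + cf 2 • x + cf 3 • y = w := by
        simpa [Fin.sum_univ_four] using hcf
      obtain ⟨h0, h1, h2, h3⟩ := haux _ _ _ _ w hfw0 hcf'
      rw [h0, h1, h2, h3] at hcf'
      simp at hcf'
      exact hwne hcf'.symm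
    set ψ0 : g →ₗ[ℝ] ℝ := f ∘ₗ (LieAlgebra.ad ℝ g e0) with hψ0
    set ψ1 : g →ₗ[ℝ] ℝ := f ∘ₗ (LieAlgebra.ad ℝ g e1) with hψ1
    set U : Submodule ℝ g := LinearMap.ker (ψ0.prod ψ1) with hU
    have hUmem : ∀ t : g, t ∈ U ↔ (f ⁅e0, t⁆ = 0 ∧ f ⁅e1, t⁆ = 0) := by
      intro t
      rw [hU, LinearMap.mem_ker, LinearMap.prod_apply, Prod.mk_eq_zero, hψ0, hψ1]
      simp [LinearMap.comp_apply, LieAlgebra.ad_apply]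
    have hU2 : 2 ≤ finrank ℝ U := by
      have hrn := LinearMap.finrank_range_add_finrank_ker (ψ0.prod ψ1)
      have hr2 : finrank ℝ (LinearMap.range (ψ0.prod ψ1)) ≤ 2 := by
        have := Submodule.finrank_le (LinearMap.range (ψ0.prod ψ1))
        simpa using this
      rw [hdim] at hrn
      rw [hU]
      omega
    have hwU : w ∈ U := (hUmem w).mpr ⟨hfw0' e0, hfw0' e1⟩
    obtain ⟨e2, he2U, he2w⟩ : ∃ e2, e2 ∈ U ∧ e2 ∉ Submodule.span ℝ {w} := by
      have hnle : ¬ (U ≤ Submodule.span ℝ {w}) := by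
        intro hle
        have := Submodule.finrank_mono hle
        rw [finrank_span_singleton hwne] at this
        omega
      exact SetLike.not_le_iff_exists.mp hnle
    obtain ⟨he20, he21⟩ := (hUmem e2).mp he2U
    have hUc : ∀ u, u ∈ U → ∀ t : g, ⁅u, t⁆ = 0 := by
      intro u hu t
      obtain ⟨hu0, hu1⟩ := (hUmem u).mp hu
      have hu0' : f ⁅u, e0⁆ = 0 := by rw [hskf, hu0, neg_zero]
      have hu1' : f ⁅u, e1⁆ = 0 := by rw [hskf, hu1, neg_zero]
      set t' : g := t + (f ⁅t, e1⁆) • e0 - (f ⁅t, e0⁆) • e1 with ht'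
      have ht'0 : f ⁅t', e0⁆ = 0 := by
        rw [ht']
        simp only [sub_lie, add_lie, smul_lie, map_sub, map_add, map_smul, smul_eq_mul,
          hself, hw10]
        ring
      have ht'1 : f ⁅t', e1⁆ = 0 := by
        rw [ht']
        simp only [sub_lie, add_lie, smul_lie, map_sub, map_add, map_smul, smul_eq_mul,
          hself, hw01]
        ring
      have hut' : f ⁅u, t'⁆ = 0 := hkey u t' hu0' hu1' ht'0 ht'1
      have hft : f ⁅u, t⁆ = 0 := by
        have hexp : f ⁅u, t'⁆ = f ⁅u, t⁆ + f ⁅t, e1⁆ * f ⁅u, e0⁆ - f ⁅t, e0⁆ * f ⁅u, e1⁆ := by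
          rw [ht']
          simp only [lie_sub, lie_add, lie_smul, map_sub, map_add, map_smul, smul_eq_mul]
        rw [hut', hu0', hu1'] at hexp
        linarith
      rw [hrep u t, hft, zero_smul]
    have hli : LinearIndependent ℝ ![e0, e1, e2, w] := by
      rw [Fintype.linearIndependent_iff]
      intro cfun hsum
      have hs : cfun 0 • e0 + cfun 1 • e1 + cfun 2 • e2 + cfun 3 • w = 0 := by
        simpa [Fin.sum_univ_four] using hsum
      have happ : ∀ t : g,
          cfun 0 * f ⁅e0, t⁆ + cfun 1 * f ⁅e1, t⁆ + cfun 2 * f ⁅e2, t⁆ + cfun 3 * f ⁅w, t⁆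
            = 0 := by
        intro t
        have := congrArg (fun v => f ⁅v, t⁆) hs
        simpa [add_lie, smul_lie, map_add, smul_eq_mul, zero_lie] using this
      have he2f : ∀ t : g, f ⁅e2, t⁆ = 0 := fun t => by rw [hUc e2 he2U t, map_zero]
      have h0 : cfun 0 = 0 := by
        have h := happ e1
        rw [hself e1, hw01, he2f e1, hfw0 e1] at h
        linarith
      have h1 : cfun 1 = 0 := by
        have h := happ e0
        rw [hself e0, hw10, he2f e0, hfw0 e0] at h
        linarith
      have h23 : cfun 2 • e2 + cfun 3 • w = 0 := by
        rw [h0, h1] at hs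
        simpa using hs
      have h2 : cfun 2 = 0 := by
        by_contra hc2
        apply he2w
        rw [Submodule.mem_span_singleton]
        refine ⟨-((cfun 2)⁻¹ * cfun 3), ?_⟩
        have := congrArg (fun v => (cfun 2)⁻¹ • v) h23
        simp only [smul_add, smul_smul, inv_mul_cancel₀ hc2, one_smul, smul_zero] at this
        rw [neg_smul]
        exact neg_eq_of_add_eq_zero_left this
      have h3 : cfun 3 = 0 := by
        rw [h2, zero_smul, zero_add] at h23
        rcases smul_eq_zero.mp h23 with h | h
        · exact h
        · exact absurd h hwne
      intro i
      fin_cases i <;> assumption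
    have hcard : Fintype.card (Fin 4) = finrank ℝ g := by rw [hdim]; simp
    refine ⟨basisOfLinearIndependentOfCardEqFinrank hli hcard, ?_, ?_, ?_, ?_, ?_, ?_⟩ <;>
      simp only [coe_basisOfLinearIndependentOfCardEqFinrank, Matrix.cons_val_zero,
        Matrix.cons_val_one, Matrix.head_cons, Matrix.cons_val_two, Matrix.tail_cons,
        Matrix.cons_val_three, Matrix.head_fin_const]
    · exact h01
    · rw [hskw, hUc e2 he2U e0, neg_zero]
    · exact hwcen e0
    · rw [hskw, hUc e2 he2U e1, neg_zero]
    · exact hwcen e1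
    · exact hwcen e2
  · -- dimension 2 : contradiction using J
    exfalso
    have hn2 : finrank ℝ D.toSubmodule = 2 := hn
    have hEne_bot : E.toSubmodule ≠ ⊥ := by
      intro hbot
      have hDz : D.toSubmodule ≤ zc g := by
        intro d hd
        rw [Stmt12.mem_zc]
        intro t
        have h1 : ⁅t, d⁆ ∈ E.toSubmodule := hmemE t d hd
        rw [hbot] at h1
        have h0 : ⁅t, d⁆ = 0 := by simpa using h1
        rw [hskw, h0, neg_zero]
      have h2 : 2 ≤ finrank ℝ (zc g) := hn2 ▸ Submodule.finrank_mono hDz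
      have h3 := derived_small hdim h2
      rw [← hDdef] at h3
      omega
    have hErank : finrank ℝ E.toSubmodule = 1 := by
      have hlt := Submodule.finrank_lt_finrank_of_lt hEltD
      have hne0 : finrank ℝ E.toSubmodule ≠ 0 :=
        fun h => hEne_bot (Submodule.finrank_eq_zero.mp h)
      omega
    have hFbot : ∀ (t z : g), z ∈ E.toSubmodule → ⁅t, z⁆ = 0 := by
      set F : LieIdeal ℝ g := ⁅(⊤ : LieIdeal ℝ g), E⁆ with hFdef
      have hFle : F ≤ E := LieSubmodule.lie_le_right E ⊤
      have hFne : F ≠ E := by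
        intro h
        apply hEne_bot
        have : E = ⊥ := by
          apply nil_fix (N := E)
          rw [← hFdef]
          exact h
        rw [this, LieSubmodule.bot_toSubmodule]
      have hFlt : F.toSubmodule < E.toSubmodule :=
        lt_of_le_of_ne ((LieSubmodule.toSubmodule_le_toSubmodule _ _).mpr hFle)
          (fun h => hFne (LieSubmodule.toSubmodule_injective h))
      have hFr := Submodule.finrank_lt_finrank_of_lt hFlt
      rw [hErank] at hFr
      have hF0 : F.toSubmodule = ⊥ := Submodule.finrank_eq_zero.mp (by omega)
      intro t z hz
      have hmem : ⁅t, z⁆ ∈ F.toSubmodule :=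
        (LieSubmodule.mem_toSubmodule _).mpr
          (LieSubmodule.lie_mem_lie (LieSubmodule.mem_top t)
            ((LieSubmodule.mem_toSubmodule _).mp hz))
      rw [hF0] at hmem
      simpa using hmem
    obtain ⟨w0, hw0ne, hw0span⟩ := finrank_eq_one_iff'.mp hErank
    set w : g := (w0 : g) with hwdef
    have hwne : w ≠ 0 := fun h => hw0ne (Subtype.ext h)
    have hwE : w ∈ E.toSubmodule := w0.2
    have hwD : w ∈ D.toSubmodule := hEltD.le hwE
    have hEspan : ∀ z, z ∈ E.toSubmodule → ∃ c : ℝ, z = c • w := by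
      intro z hz
      obtain ⟨c, hc⟩ := hw0span ⟨z, hz⟩
      refine ⟨c, ?_⟩
      have := congrArg Subtype.val hc
      simpa [hwdef] using this.symm
    have hwcen : ∀ t : g, ⁅t, w⁆ = 0 := fun t => hFbot t w hwE
    have hwcen' : ∀ t : g, ⁅w, t⁆ = 0 := fun t => by rw [hskw, hwcen, neg_zero]
    have hJw : ∀ t : g, ⁅t, J w⁆ = 0 := by
      by_cases hK : (D.toSubmodule ⊓ D.toSubmodule.map J) = ⊥
      · intro t
        have h1 : ⁅t, J w⁆ ∈ D.toSubmodule := hmemD _ _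
        have h2 : J ⁅t, J w⁆ ∈ D.toSubmodule := by
          have hi := hint t w
          rw [hwcen t, hwcen (J t), map_zero, zero_add, zero_add] at hi
          rw [← hi]
          exact hmemD _ _
        have h3 : ⁅t, J w⁆ ∈ D.toSubmodule.map J :=
          Submodule.mem_map.mpr ⟨-(J ⁅t, J w⁆), neg_mem h2, by rw [map_neg, hJ2, neg_neg]⟩
        have h4 : ⁅t, J w⁆ ∈ (⊥ : Submodule ℝ g) := hK ▸ Submodule.mem_inf.mpr ⟨h1, h3⟩
        simpa using h4
      · obtain ⟨x0, hx0K, hx0ne⟩ := Submodule.exists_mem_ne_zero_of_ne_bot hK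
        have hKJ : ∀ v, v ∈ (D.toSubmodule ⊓ D.toSubmodule.map J) →
            J v ∈ (D.toSubmodule ⊓ D.toSubmodule.map J) := by
          intro v hv
          obtain ⟨hv1, hv2⟩ := Submodule.mem_inf.mp hv
          obtain ⟨y, hy, hyv⟩ := Submodule.mem_map.mp hv2
          refine Submodule.mem_inf.mpr ⟨?_, Submodule.mem_map.mpr ⟨v, hv1, rfl⟩⟩
          rw [← hyv, hJ2]
          exact neg_mem hy
        have hpair := pair_indep J hJ2 hx0ne
        have hspanK : Submodule.span ℝ (Set.range ![x0, J x0]) ≤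
            (D.toSubmodule ⊓ D.toSubmodule.map J) := by
          rw [Submodule.span_le]
          rintro _ ⟨i, rfl⟩
          fin_cases i
          · simpa using hx0K
          · simpa using hKJ x0 hx0K
        have h2K : 2 ≤ finrank ℝ (D.toSubmodule ⊓ D.toSubmodule.map J : Submodule ℝ g) := by
          have hfr := finrank_span_eq_card hpair
          calc 2 = finrank ℝ (Submodule.span ℝ (Set.range ![x0, J x0])) := by rw [hfr]; simp
            _ ≤ _ := Submodule.finrank_mono hspanK
        have hKD : (D.toSubmodule ⊓ D.toSubmodule.map J) = D.toSubmodule :=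
          Submodule.eq_of_le_of_finrank_le inf_le_left (by rw [hn2]; exact h2K)
        have hJD : ∀ z, z ∈ D.toSubmodule → J z ∈ D.toSubmodule := by
          intro z hz
          have hz' : z ∈ (D.toSubmodule ⊓ D.toSubmodule.map J) := by rw [hKD]; exact hz
          obtain ⟨-, hv2⟩ := Submodule.mem_inf.mp hz'
          obtain ⟨y, hy, hyz⟩ := Submodule.mem_map.mp hv2
          rw [← hyz, hJ2]
          exact neg_mem hy
        have hc : ∀ (x z : g), z ∈ D.toSubmodule → ⁅J x, z⁆ + ⁅x, J z⁆ = 0 := by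
          intro x z hz
          obtain ⟨c, hcs⟩ := hEspan _ (Submodule.add_mem _ (hmemE (J x) z hz)
            (hmemE x (J z) (hJD z hz)))
          have hJs : J (⁅J x, z⁆ + ⁅x, J z⁆) = ⁅J x, J z⁆ - ⁅x, z⁆ := by
            have hi := hint x z
            rw [map_add, hi]
            abel
          obtain ⟨dc, hds⟩ := hEspan (J (⁅J x, z⁆ + ⁅x, J z⁆)) (by
            rw [hJs]
            exact Submodule.sub_mem _ (hmemE (J x) (J z) (hJD z hz)) (hmemE x z hz))
          by_cases hc0 : c = 0
          · rw [hcs, hc0, zero_smul]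
          · exfalso
            have hJw_eq : c • J w = dc • w := by rw [← map_smul, ← hcs, hds]
            have hJweq : J w = (c⁻¹ * dc) • w := by
              have := congrArg (fun v => c⁻¹ • v) hJw_eq
              simpa [smul_smul, inv_mul_cancel₀ hc0] using this
            have hsq : -w = ((c⁻¹ * dc) * (c⁻¹ * dc)) • w := by
              rw [← hJ2 w, hJweq, map_smul, hJweq, smul_smul]
            have h0 : ((c⁻¹ * dc) * (c⁻¹ * dc) + 1) • w = 0 := by
              rw [add_smul, one_smul, ← hsq]
              simp
            have hco : ((c⁻¹ * dc) * (c⁻¹ * dc) + 1) ≠ 0 := by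
              nlinarith [sq_nonneg (c⁻¹ * dc)]
            rcases smul_eq_zero.mp h0 with h | h
            · exact hco h
            · exact hwne h
        intro t
        have hct := hc t w hwD
        rw [hwcen (J t)] at hct
        simpa using hct
    have hJwcen' : ∀ t : g, ⁅J w, t⁆ = 0 := fun t => by rw [hskw, hJw, neg_zero]
    have hpair := pair_indep J hJ2 hwne
    have hsp : Submodule.span ℝ (Set.range ![w, J w]) ≤ zc g := by
      rw [Submodule.span_le]
      rintro _ ⟨i, rfl⟩
      fin_cases i
      · simpa using SetLike.mem_coe.mpr ((Stmt12.mem_zc).mpr hwcen')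
      · simpa using SetLike.mem_coe.mpr ((Stmt12.mem_zc).mpr hJwcen')
    have hzc2 : 2 ≤ finrank ℝ (zc g) := by
      have hfr := finrank_span_eq_card hpair
      calc 2 = finrank ℝ (Submodule.span ℝ (Set.range ![w, J w])) := by rw [hfr]; simp
        _ ≤ finrank ℝ (zc g) := Submodule.finrank_mono hsp
    have h3 := derived_small hdim hzc2
    rw [← hDdef] at h3
    omega
  · -- dimension ≥ 3 : impossible for nilpotent
    exfalso
    have hsup : ∃ x : g, D.toSubmodule ⊔ Submodule.span ℝ {x} = ⊤ := by
      by_cases htop : D.toSubmodule = ⊤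
      · exact ⟨0, by rw [Submodule.span_zero_singleton, sup_bot_eq, htop]⟩
      · obtain ⟨x, -, hx⟩ := SetLike.not_le_iff_exists.mp (fun hle => htop (top_le_iff.mp hle))
        refine ⟨x, ?_⟩
        apply Submodule.eq_top_of_finrank_eq
        rw [hdim]
        have hlt : D.toSubmodule < D.toSubmodule ⊔ Submodule.span ℝ {x} := by
          refine lt_of_le_of_ne le_sup_left (fun h => hx ?_)
          rw [h]
          exact Submodule.mem_sup_right (Submodule.mem_span_singleton_self x)
        have h1 : 3 < finrank ℝ (D.toSubmodule ⊔ Submodule.span ℝ {x} : Submodule ℝ g) :=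
          lt_of_le_of_lt hn3 (Submodule.finrank_lt_finrank_of_lt hlt)
        have h2 : finrank ℝ (D.toSubmodule ⊔ Submodule.span ℝ {x} : Submodule ℝ g) ≤ 4 :=
          hdim ▸ Submodule.finrank_le _
        omega
    obtain ⟨x, hxtop⟩ := hsup
    have hdec : ∀ a : g, ∃ (d : g) (s : ℝ), d ∈ D.toSubmodule ∧ a = d + s • x := by
      intro a
      have ha : a ∈ D.toSubmodule ⊔ Submodule.span ℝ {x} := by rw [hxtop]; trivial
      obtain ⟨d, hd, y, hy, hsum⟩ := Submodule.mem_sup.mp ha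
      obtain ⟨s, hs⟩ := Submodule.mem_span_singleton.mp hy
      exact ⟨d, s, hd, by rw [← hsum, ← hs]⟩
    have hsubm : D.toSubmodule ≤ E.toSubmodule := by
      rw [hDdef, LieSubmodule.lieIdeal_oper_eq_linear_span']
      apply Submodule.span_le.mpr
      rintro m ⟨p, -, q, -, rfl⟩
      obtain ⟨d, s, hd, hp⟩ := hdec p
      obtain ⟨d', t, hd', hq⟩ := hdec q
      rw [hp, hq, add_lie, smul_lie]
      apply Submodule.add_mem
      · rw [hskw]
        exact neg_mem (hmemE _ _ hd)
      · apply Submodule.smul_mem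
        rw [lie_add, lie_smul, lie_self, smul_zero, add_zero]
        exact hmemE x d' hd'
    have hED : E = D := le_antisymm hEleD
      ((LieSubmodule.toSubmodule_le_toSubmodule _ _).mp hsubm)
    exact hEneD hED
end

section
/- The 4-dimensional real nilpotent Lie algebra with basis e₁,e₂,e₃,e₄ and nonzero brackets [e₁,e₂] = -e₃, [e₁,e₃] = -e₄ (dually: de¹=de²=0, de³=e¹∧e², de⁴=e¹∧e³) does not admit any integrable almost-complex structure. -/
/-- The 4-dimensional filiform nilpotent Lie algebra
`(0,0,12,13)`, i.e. with basis `e₁,…,e₄` and nonzero brackets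
`⁅e₁,e₂⁆ = -e₃`, `⁅e₁,e₃⁆ = -e₄`, admits no integrable almost-complex
structure. -/
theorem stmt13 {g : Type*} [LieRing g] [LieAlgebra ℝ g]
    (e : Module.Basis (Fin 4) ℝ g)
    (h01 : ⁅e 0, e 1⁆ = -e 2) (h02 : ⁅e 0, e 2⁆ = -e 3)
    (h03 : ⁅e 0, e 3⁆ = 0) (h12 : ⁅e 1, e 2⁆ = 0)
    (h13 : ⁅e 1, e 3⁆ = 0) (h23 : ⁅e 2, e 3⁆ = 0) :
    ¬ ∃ J : g →ₗ[ℝ] g, (∀ X : g, J (J X) = -X) ∧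
        ∀ X Y : g, ⁅J X, J Y⁆ = ⁅X, Y⁆ + J ⁅J X, Y⁆ + J ⁅X, J Y⁆ := by
  have h10 : ⁅e 1, e 0⁆ = e 2 := by rw [← lie_skew, h01, neg_neg]
  have h20 : ⁅e 2, e 0⁆ = e 3 := by rw [← lie_skew, h02, neg_neg]
  have h30 : ⁅e 3, e 0⁆ = 0 := by rw [← lie_skew, h03, neg_zero]
  have h21 : ⁅e 2, e 1⁆ = 0 := by rw [← lie_skew, h12, neg_zero]
  have h31 : ⁅e 3, e 1⁆ = 0 := by rw [← lie_skew, h13, neg_zero]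
  have h32 : ⁅e 3, e 2⁆ = 0 := by rw [← lie_skew, h23, neg_zero]
  have brkt : ∀ X Y : g, ⁅X, Y⁆ =
      (e.repr X 1 * e.repr Y 0 - e.repr X 0 * e.repr Y 1) • e 2 +
      (e.repr X 2 * e.repr Y 0 - e.repr X 0 * e.repr Y 2) • e 3 := by
    intro X Y
    have hs : ⁅(∑ i, e.repr X i • e i : g), (∑ j, e.repr Y j • e j : g)⁆ =
        (e.repr X 1 * e.repr Y 0 - e.repr X 0 * e.repr Y 1) • e 2 +
        (e.repr X 2 * e.repr Y 0 - e.repr X 0 * e.repr Y 2) • e 3 := by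
      rw [Fin.sum_univ_four, Fin.sum_univ_four]
      simp only [add_lie, lie_add, smul_lie, lie_smul, h01, h02, h03, h12, h13, h23,
        h10, h20, h30, h21, h31, h32, lie_self, smul_zero, smul_neg, smul_smul,
        add_zero, zero_add]
      module
    simpa only [e.sum_repr] using hs
  rintro ⟨J, hJ2, hN⟩
  -- e 3 is central
  have hz : ∀ X : g, ⁅(e 3 : g), X⁆ = 0 := by
    intro X
    rw [brkt]
    simp [Module.Basis.repr_self, Finsupp.single_apply]
  set W := J (e 3) with hW
  -- key integrability consequence
  have K : ∀ Y : g, ⁅W, J Y⁆ = J ⁅W, Y⁆ := by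
    intro Y
    have h := hN (e 3) Y
    rw [hz Y, hz (J Y)] at h
    simpa using h
  -- Step A : e.repr W 0 = 0
  have hw0 : e.repr W 0 = 0 := by
    have hA := K (e 2)
    rw [brkt W (J (e 2)), brkt W (e 2)] at hA
    have h := congrArg (fun v => e.repr v 0) hA
    simp only [Module.Basis.repr_self, Finsupp.single_apply, map_add, map_smul, map_sub, map_neg,
      Finsupp.coe_add, Finsupp.coe_smul, Pi.add_apply, Pi.smul_apply, smul_eq_mul] at h
    simp [Module.Basis.repr_self, Finsupp.single_apply, ← hW] at h
    -- h should give (e.repr W 0)^2 = 0 in some form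
    nlinarith [h, sq_nonneg (e.repr W 0)]
  -- Step B : e.repr W 1 = 0 and e.repr W 2 = 0
  have hB := K (e 0)
  rw [brkt W (J (e 0)), brkt W (e 0)] at hB
  simp only [Module.Basis.repr_self, Finsupp.single_apply, hw0] at hB
  simp only [if_true, mul_one] at hB
  set u := e.repr (J (e 0)) 0 with hu
  set b := e.repr W 1 with hb'
  set c := e.repr W 2 with hc'
  -- apply J to hB
  have hB2 := congrArg J hB
  simp only [map_add, map_smul, hJ2] at hB2
  simp only [zero_mul, sub_zero, mul_zero] at hB hB2
  have hL : (b * u) • J (e 2) + (c * u) • J (e 3) = u • (b • J (e 2) + c • J (e 3)) := by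
    module
  simp only [map_add, map_smul] at hB
  rw [hL, ← hB] at hB2
  -- coefficients
  have h2 := congrArg (fun v => e.repr v 2) hB2
  have h3 := congrArg (fun v => e.repr v 3) hB2
  simp [Module.Basis.repr_self, Finsupp.single_apply, smul_eq_mul] at h2 h3
  have hb : b = 0 := by
    rcases mul_eq_zero.mp (show b * (u * u + 1) = 0 by linear_combination h2) with h | h
    · exact h
    · exact absurd h (ne_of_gt (lt_add_of_le_of_pos (mul_self_nonneg u) one_pos))
  have hc : c = 0 := by
    rcases mul_eq_zero.mp (show c * (u * u + 1) = 0 by linear_combination h3) with h | h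
    · exact h
    · exact absurd h (ne_of_gt (lt_add_of_le_of_pos (mul_self_nonneg u) one_pos))
  -- hence W = w3 • e 3
  have hWexp := (e.sum_repr W).symm
  rw [Fin.sum_univ_four, hw0, ← hb', ← hc', hb, hc] at hWexp
  simp only [zero_smul, zero_add, add_zero] at hWexp
  -- J W = -(e 3)
  have hfin := hJ2 (e 3)
  rw [← hW, hWexp, map_smul, ← hW, hWexp, smul_smul] at hfin
  have h4 := congrArg (fun v => e.repr v 3) hfin
  simp [Module.Basis.repr_self, Finsupp.single_apply, smul_eq_mul] at h4
  nlinarith [sq_nonneg (e.repr W 3), h4]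
end

section
/- Let g be a nonzero finite-dimensional real Lie algebra and suppose there exists α ∈ g* such that dσ = σ ∧ α for all σ ∈ g* (equivalently, g has a basis e₀,e₁,…,e_{m-1} with [e₀,e_i] = e_i for i ≥ 1 and all other brackets zero). Then every almost-complex structure J on g (J² = -1) is integrable. -/
/-!
Pairing `dσ = σ ∧ α` with all `σ ∈ g*` shows that the bracket is `⁅X, Y⁆ = α X • Y - α Y • X`.
For this bracket the two sides of the integrability condition for a linear `J` differ by
`α X • (Y + J (J Y)) - α Y • (X + J (J X))`, which vanishes as soon as `J² = -1`.
-/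

section

variable {R L : Type*} [CommRing R] [LieRing L] [LieAlgebra R L]

theorem lie_eq_smul_sub_smul_of_forall_dual [Module.Projective R L] (α : Module.Dual R L)
    (hα : ∀ σ : Module.Dual R L, ∀ X Y : L, -σ ⁅X, Y⁆ = σ X * α Y - σ Y * α X) (X Y : L) :
    ⁅X, Y⁆ = α X • Y - α Y • X := by
  rw [← sub_eq_zero, ← Module.forall_dual_apply_eq_zero_iff R]
  intro σ
  simp only [map_sub, map_smul, smul_eq_mul]
  linear_combination -hα σ X Y

theorem integrable_of_lie_eq_smul_sub_smul (α : Module.Dual R L)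
    (hbracket : ∀ X Y : L, ⁅X, Y⁆ = α X • Y - α Y • X)
    (J : L →ₗ[R] L) (hJ2 : ∀ X : L, J (J X) = -X) (X Y : L) :
    ⁅J X, J Y⁆ = ⁅X, Y⁆ + J ⁅J X, Y⁆ + J ⁅X, J Y⁆ := by
  simp only [hbracket, map_sub, map_smul, hJ2]
  module

end

theorem stmt14_general {g : Type*} [LieRing g] [LieAlgebra ℝ g]
    (α : Module.Dual ℝ g)
    (hα : ∀ σ : Module.Dual ℝ g, ∀ X Y : g,
      -σ ⁅X, Y⁆ = σ X * α Y - σ Y * α X)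
    (J : g →ₗ[ℝ] g) (hJ2 : ∀ X : g, J (J X) = -X) :
    ∀ X Y : g, ⁅J X, J Y⁆ = ⁅X, Y⁆ + J ⁅J X, Y⁆ + J ⁅X, J Y⁆ :=
  integrable_of_lie_eq_smul_sub_smul α (lie_eq_smul_sub_smul_of_forall_dual α hα) J hJ2

/-- If a nonzero finite-dimensional real Lie algebra `g` has
`α ∈ g*` with `dσ = σ ∧ α` for every `σ ∈ g*` (where `dσ(X,Y) = -σ⁅X,Y⁆`),
then every almost-complex structure on `g` is integrable. -/
theorem stmt14 {g : Type*} [LieRing g] [LieAlgebra ℝ g] [Nontrivial g]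
    [FiniteDimensional ℝ g]
    (α : Module.Dual ℝ g)
    (hα : ∀ σ : Module.Dual ℝ g, ∀ X Y : g,
      -σ ⁅X, Y⁆ = σ X * α Y - σ Y * α X)
    (J : g →ₗ[ℝ] g) (hJ2 : ∀ X : g, J (J X) = -X) :
    ∀ X Y : g, ⁅J X, J Y⁆ = ⁅X, Y⁆ + J ⁅J X, Y⁆ + J ⁅X, J Y⁆ :=
  stmt14_general α hα J hJ2
end

section
/- Let g be the 6-dimensional real nilpotent Lie algebra with dual basis e¹,…,e⁶ and structure equations de¹=de²=0, de³=e¹∧e², de⁴=e¹∧e³, de⁵=e¹∧e⁴, de⁶=e³∧e⁴+e⁵∧e² (i.e. g = (0,0,12,13,14,34+52)). Then g admits no symplectic form: there is no closed 2-form σ ∈ Λ²g* (dσ = 0 with respect to the Chevalley-Eilenberg differential) with σ ∧ σ ∧ σ ≠ 0. -/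
open Function

section helpers
variable {V : Type*} [AddCommGroup V] [Module ℝ V]

/-- The 6-form `σ∧σ∧σ` (as an alternating sum over permutations), packaged as a
multilinear map. -/
def sixForm (σ : V →ₗ[ℝ] V →ₗ[ℝ] ℝ) : MultilinearMap ℝ (fun _ : Fin 6 => V) ℝ where
  toFun X := ∑ τ : Equiv.Perm (Fin 6), ((Equiv.Perm.sign τ : ℤ) : ℝ) *
      (σ (X (τ 0)) (X (τ 1)) * σ (X (τ 2)) (X (τ 3)) * σ (X (τ 4)) (X (τ 5)))
  map_update_add' := by
    intro inst X i a b
    have hi : inst = instDecidableEqFin 6 := Subsingleton.elim _ _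
    subst hi
    rw [← Finset.sum_add_distrib]
    refine Finset.sum_congr rfl fun τ _ => ?_
    have hupd : ∀ (v : V) (m : Fin 6),
        Function.update X i v (τ m) = if m = τ.symm i then v else X (τ m) := by
      intro v m
      rcases eq_or_ne m (τ.symm i) with h | h
      · subst h; rw [Equiv.apply_symm_apply, Function.update_self, if_pos rfl]
      · rw [if_neg h, Function.update_of_ne]
        intro hh
        exact h (by rw [← hh, Equiv.symm_apply_apply])
    obtain ⟨k, hk⟩ : ∃ k, τ.symm i = k := ⟨_, rfl⟩
    simp only [hupd, hk]
    fin_cases k <;>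
      simp <;> ring
  map_update_smul' := by
    intro inst X i c a
    have hi : inst = instDecidableEqFin 6 := Subsingleton.elim _ _
    subst hi
    rw [Finset.smul_sum]
    refine Finset.sum_congr rfl fun τ _ => ?_
    have hupd : ∀ (v : V) (m : Fin 6),
        Function.update X i v (τ m) = if m = τ.symm i then v else X (τ m) := by
      intro v m
      rcases eq_or_ne m (τ.symm i) with h | h
      · subst h; rw [Equiv.apply_symm_apply, Function.update_self, if_pos rfl]
      · rw [if_neg h, Function.update_of_ne]
        intro hh
        exact h (by rw [← hh, Equiv.symm_apply_apply])
    obtain ⟨k, hk⟩ : ∃ k, τ.symm i = k := ⟨_, rfl⟩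
    simp only [hupd, hk]
    fin_cases k <;>
      simp <;> ring

lemma sixForm_alt (σ : V →ₗ[ℝ] V →ₗ[ℝ] ℝ) (X : Fin 6 → V) (i j : Fin 6)
    (hij : i ≠ j) (hX : X i = X j) : sixForm σ X = 0 := by
  have key : ∀ n, X (Equiv.swap i j n) = X n := by
    intro n
    rw [Equiv.swap_apply_def]
    split_ifs with h1 h2
    · rw [h1, hX]
    · rw [h2, ← hX]
    · rfl
  set f : Equiv.Perm (Fin 6) → ℝ := fun τ => ((Equiv.Perm.sign τ : ℤ) : ℝ) *
      (σ (X (τ 0)) (X (τ 1)) * σ (X (τ 2)) (X (τ 3)) * σ (X (τ 4)) (X (τ 5))) with hf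
  have h1 : ∑ τ : Equiv.Perm (Fin 6), f (Equiv.swap i j * τ) = ∑ τ, f τ :=
    Fintype.sum_equiv (Equiv.mulLeft (Equiv.swap i j)) _ _ (fun τ => rfl)
  have h2 : ∀ τ : Equiv.Perm (Fin 6), f (Equiv.swap i j * τ) = - f τ := by
    intro τ
    have hs : ((Equiv.Perm.sign (Equiv.swap i j * τ) : ℤ) : ℝ)
        = -((Equiv.Perm.sign τ : ℤ) : ℝ) := by
      rw [Equiv.Perm.sign_mul, Equiv.Perm.sign_swap hij]
      push_cast
      ring
    simp only [hf, Equiv.Perm.mul_apply, key, hs]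
    ring
  have h3 : sixForm σ X = ∑ τ, f τ := rfl
  have h4 : ∑ τ : Equiv.Perm (Fin 6), f (Equiv.swap i j * τ) = -∑ τ, f τ := by
    rw [Finset.sum_congr rfl fun τ _ => h2 τ, Finset.sum_neg_distrib]
  rw [h3]
  linarith [h1, h4]

set_option maxRecDepth 10000 in
lemma sixForm_apply (σ : V →ₗ[ℝ] V →ₗ[ℝ] ℝ) (X : Fin 6 → V) :
    sixForm σ X = ∑ τ : Equiv.Perm (Fin 6), ((Equiv.Perm.sign τ : ℤ) : ℝ) *
      (σ (X (τ 0)) (X (τ 1)) * σ (X (τ 2)) (X (τ 3)) * σ (X (τ 4)) (X (τ 5))) := rfl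

end helpers

/-- The 6-dimensional nilpotent Lie algebra
`(0,0,12,13,14,34+52)`, i.e. with basis `e₁,…,e₆` (0-indexed below) and nonzero
brackets `⁅e₁,e₂⁆ = -e₃`, `⁅e₁,e₃⁆ = -e₄`, `⁅e₁,e₄⁆ = -e₅`, `⁅e₃,e₄⁆ = -e₆`,
`⁅e₂,e₅⁆ = e₆`, admits no symplectic form: there is no closed 2-form `σ`
with `σ ∧ σ ∧ σ ≠ 0`.  Here a 2-form is an alternating bilinear form,
closedness is the Chevalley-Eilenberg cocycle condition, and `σ∧σ∧σ ≠ 0` is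
expressed by the nonvanishing of `(σ∧σ∧σ)(X₁,…,X₆)` (as an alternating sum
over permutations) for some vectors `X₁,…,X₆`. -/
theorem stmt16 {g : Type*} [LieRing g] [LieAlgebra ℝ g]
    (e : Module.Basis (Fin 6) ℝ g)
    (h01 : ⁅e 0, e 1⁆ = -e 2) (h02 : ⁅e 0, e 2⁆ = -e 3)
    (h03 : ⁅e 0, e 3⁆ = -e 4) (h23 : ⁅e 2, e 3⁆ = -e 5)
    (h14 : ⁅e 1, e 4⁆ = e 5)
    (h04 : ⁅e 0, e 4⁆ = 0) (h05 : ⁅e 0, e 5⁆ = 0)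
    (h12 : ⁅e 1, e 2⁆ = 0) (h13 : ⁅e 1, e 3⁆ = 0) (h15 : ⁅e 1, e 5⁆ = 0)
    (h24 : ⁅e 2, e 4⁆ = 0) (h25 : ⁅e 2, e 5⁆ = 0)
    (h34 : ⁅e 3, e 4⁆ = 0) (h35 : ⁅e 3, e 5⁆ = 0) (h45 : ⁅e 4, e 5⁆ = 0) :
    ¬ ∃ σ : g →ₗ[ℝ] g →ₗ[ℝ] ℝ,
        (∀ X : g, σ X X = 0) ∧
        (∀ X Y Z : g, σ ⁅X, Y⁆ Z + σ ⁅Y, Z⁆ X + σ ⁅Z, X⁆ Y = 0) ∧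
        (∃ X : Fin 6 → g,
          (∑ τ : Equiv.Perm (Fin 6), ((Equiv.Perm.sign τ : ℤ) : ℝ) *
            (σ (X (τ 0)) (X (τ 1)) * σ (X (τ 2)) (X (τ 3)) *
              σ (X (τ 4)) (X (τ 5)))) ≠ 0) := by
  rintro ⟨σ, hσ0, hc, X, hX⟩
  have hskew : ∀ a b : g, σ a b = - σ b a := by
    intro a b
    have h := hσ0 (a + b)
    simp only [map_add, LinearMap.add_apply, hσ0 a, hσ0 b] at h
    linarith
  have z25 : σ (e 2) (e 5) = 0 := by
    have h := hc (e 0) (e 1) (e 5)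
    rw [h01, h15, show ⁅e 5, e 0⁆ = (0 : g) by rw [← lie_skew, h05, neg_zero]] at h
    simp only [map_neg, map_zero, LinearMap.neg_apply, LinearMap.zero_apply] at h
    linarith
  have z35 : σ (e 3) (e 5) = 0 := by
    have h := hc (e 0) (e 2) (e 5)
    rw [h02, h25, show ⁅e 5, e 0⁆ = (0 : g) by rw [← lie_skew, h05, neg_zero]] at h
    simp only [map_neg, map_zero, LinearMap.neg_apply, LinearMap.zero_apply] at h
    linarith
  have z45 : σ (e 4) (e 5) = 0 := by
    have h := hc (e 0) (e 3) (e 5)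
    rw [h03, h35, show ⁅e 5, e 0⁆ = (0 : g) by rw [← lie_skew, h05, neg_zero]] at h
    simp only [map_neg, map_zero, LinearMap.neg_apply, LinearMap.zero_apply] at h
    linarith
  have z15 : σ (e 1) (e 5) = 0 := by
    have h := hc (e 1) (e 2) (e 3)
    rw [h12, h23, show ⁅e 3, e 1⁆ = (0 : g) by rw [← lie_skew, h13, neg_zero]] at h
    simp only [map_neg, map_zero, LinearMap.neg_apply, LinearMap.zero_apply] at h
    have hs := hskew (e 1) (e 5)
    linarith
  have z05 : σ (e 0) (e 5) = 0 := by
    have hA := hc (e 0) (e 2) (e 3)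
    rw [h02, h23, show ⁅e 3, e 0⁆ = (e 4 : g) by rw [← lie_skew, h03, neg_neg]] at hA
    have hB := hc (e 0) (e 1) (e 4)
    rw [h01, h14, show ⁅e 4, e 0⁆ = (0 : g) by rw [← lie_skew, h04, neg_zero]] at hB
    simp only [map_neg, map_zero, LinearMap.neg_apply, LinearMap.zero_apply] at hA hB
    have h33 := hσ0 (e 3)
    have hs1 := hskew (e 2) (e 4)
    have hs2 := hskew (e 0) (e 5)
    linarith
  have ker : ∀ Y : g, σ Y (e 5) = 0 := by
    have hflip : σ.flip (e 5) = 0 := by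
      apply Module.Basis.ext e
      intro i
      fin_cases i <;>
        simp [LinearMap.flip_apply, z05, z15, z25, z35, z45, hσ0]
    intro Y
    have h := LinearMap.congr_fun hflip Y
    simpa [LinearMap.flip_apply] using h
  have ker' : ∀ Y : g, σ (e 5) Y = 0 := by
    intro Y
    rw [hskew, ker, neg_zero]
  have hF : sixForm σ = (0 : MultilinearMap ℝ (fun _ : Fin 6 => g) ℝ) := by
    apply Module.Basis.ext_multilinear (fun _ => e)
    intro v
    simp only [MultilinearMap.zero_apply]
    by_cases hv : Function.Injective v
    · have hs : Function.Surjective v := Finite.surjective_of_injective hv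
      obtain ⟨n, hn⟩ := hs 5
      rw [sixForm_apply]
      refine Finset.sum_eq_zero fun τ _ => ?_
      obtain ⟨m, hm⟩ : ∃ m, τ m = n := ⟨τ.symm n, Equiv.apply_symm_apply τ n⟩
      fin_cases m <;>
        first
          | (have hm' : τ 0 = n := hm; rw [hm', hn]; simp [ker'])
          | (have hm' : τ 1 = n := hm; rw [hm', hn]; simp [ker])
          | (have hm' : τ 2 = n := hm; rw [hm', hn]; simp [ker'])
          | (have hm' : τ 3 = n := hm; rw [hm', hn]; simp [ker])
          | (have hm' : τ 4 = n := hm; rw [hm', hn]; simp [ker'])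
          | (have hm' : τ 5 = n := hm; rw [hm', hn]; simp [ker])
    · obtain ⟨i, j, hvij, hij⟩ := Function.not_injective_iff.mp hv
      exact sixForm_alt σ (fun k => e (v k)) i j hij (congrArg e hvij)
  have h0 : sixForm σ X = 0 := by rw [hF]; rfl
  exact hX h0
end

section
/- Let g be a 6-dimensional real nilpotent Lie algebra admitting an integrable almost-complex structure J, and suppose the first Lie algebra cohomology H¹(g) (equivalently ker d ⊆ g*) has dimension 5 and g is non-abelian. Then g is isomorphic to one of the two Lie algebras given in dual form by (0,0,0,0,0,12) and (0,0,0,0,0,12+34), i.e. the only nonzero differential is de⁶ = e¹∧e² or de⁶ = e¹∧e² + e³∧e⁴. -/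
open Module

private lemma stmt17_pairing {V : Type*} [AddCommGroup V] [Module ℝ V]
    {n : ℕ} (f : Fin n → (V →ₗ[ℝ] ℝ)) (u : Fin n → V)
    (h : ∀ i j, f i (u j) = if i = j then 1 else 0) :
    Function.Surjective (LinearMap.pi f) := by
  intro c
  refine ⟨∑ j, c j • u j, ?_⟩
  ext i
  simp only [LinearMap.pi_apply, map_sum, map_smul, h, smul_eq_mul, mul_ite, mul_one, mul_zero]
  simp

private lemma stmt17_ker_rank {V : Type*} [AddCommGroup V] [Module ℝ V] [FiniteDimensional ℝ V]
    {n : ℕ} (f : Fin n → (V →ₗ[ℝ] ℝ)) (u : Fin n → V)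
    (h : ∀ i j, f i (u j) = if i = j then 1 else 0) :
    finrank ℝ (LinearMap.ker (LinearMap.pi f)) = finrank ℝ V - n := by
  have hs := stmt17_pairing f u h
  have h2 := LinearMap.finrank_range_add_finrank_ker (LinearMap.pi f)
  rw [LinearMap.range_eq_top.mpr hs, finrank_top] at h2
  simp only [Module.finrank_pi, Fintype.card_fin] at h2
  omega

private lemma stmt17_span {V : Type*} [AddCommGroup V] [Module ℝ V]
    {n : ℕ} (f : Fin n → (V →ₗ[ℝ] ℝ)) (u : Fin n → V)
    (h : ∀ i j, f i (u j) = if i = j then 1 else 0) (s : Set V)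
    (hu : ∀ j, u j ∈ Submodule.span ℝ s)
    (hker : ∀ y, (∀ i, f i y = 0) → y ∈ Submodule.span ℝ s) :
    ⊤ ≤ Submodule.span ℝ s := by
  intro y _
  have h1 : (y - ∑ j, f j y • u j) ∈ Submodule.span ℝ s := by
    apply hker; intro i
    simp only [map_sub, map_sum, map_smul, h, smul_eq_mul, mul_ite, mul_one, mul_zero]
    simp
  have h2 : (∑ j, f j y • u j) ∈ Submodule.span ℝ s :=
    Submodule.sum_mem _ fun j _ => Submodule.smul_mem _ _ (hu j)
  simpa using Submodule.add_mem _ h1 h2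

private lemma stmt17_ker_span {V : Type*} [AddCommGroup V] [Module ℝ V]
    {n m : ℕ} (f : Fin n → (V →ₗ[ℝ] ℝ)) (w : Basis (Fin m) ℝ (LinearMap.ker (LinearMap.pi f)))
    (s : Set V) (hw : ∀ i, ((w i : V)) ∈ s)
    (y : V) (hy : ∀ i, f i y = 0) : y ∈ Submodule.span ℝ s := by
  have hyk : y ∈ LinearMap.ker (LinearMap.pi f) := by
    rw [LinearMap.mem_ker]; ext i; simpa [LinearMap.pi_apply] using hy i
  have h1 : (⟨y, hyk⟩ : LinearMap.ker (LinearMap.pi f)) ∈ Submodule.span ℝ (Set.range w) :=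
    Basis.mem_span w _
  have h2 : y ∈ Submodule.map (LinearMap.ker (LinearMap.pi f)).subtype
      (Submodule.span ℝ (Set.range w)) := ⟨_, h1, rfl⟩
  rw [Submodule.map_span] at h2
  refine Submodule.span_le.mpr ?_ h2
  rintro _ ⟨_, ⟨i, rfl⟩, rfl⟩
  exact Submodule.subset_span (hw i)


/-- A non-abelian 6-dimensional real nilpotent Lie algebra with an
integrable almost-complex structure and `b₁ = 5` (the annihilator of `[g,g]`,
i.e. the space of closed 1-forms, is 5-dimensional) is isomorphic to
`(0,0,0,0,0,12)` or `(0,0,0,0,0,12+34)`: it has a basis `e₁,…,e₆` (0-indexed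
below) whose only nonzero brackets are `⁅e₁,e₂⁆ = -e₆`, or
`⁅e₁,e₂⁆ = -e₆ = ⁅e₃,e₄⁆`. -/
theorem stmt17 {g : Type*} [LieRing g] [LieAlgebra ℝ g] [FiniteDimensional ℝ g]
    [LieRing.IsNilpotent g] (hdim : Module.finrank ℝ g = 6)
    (hnab : ¬ IsLieAbelian g)
    (J : g →ₗ[ℝ] g) (hJ2 : ∀ X : g, J (J X) = -X)
    (hint : ∀ X Y : g, ⁅J X, J Y⁆ = ⁅X, Y⁆ + J ⁅J X, Y⁆ + J ⁅X, J Y⁆)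
    (hb1 : Module.finrank ℝ
      ↥(Submodule.dualAnnihilator
        ((LieModule.lowerCentralSeries ℝ g g 1 : LieSubmodule ℝ g g) :
          Submodule ℝ g)) = 5) :
    ∃ e : Module.Basis (Fin 6) ℝ g,
      (⁅e 0, e 1⁆ = -e 5 ∧
        ⁅e 0, e 2⁆ = 0 ∧ ⁅e 0, e 3⁆ = 0 ∧ ⁅e 0, e 4⁆ = 0 ∧ ⁅e 0, e 5⁆ = 0 ∧
        ⁅e 1, e 2⁆ = 0 ∧ ⁅e 1, e 3⁆ = 0 ∧ ⁅e 1, e 4⁆ = 0 ∧ ⁅e 1, e 5⁆ = 0 ∧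
        ⁅e 2, e 3⁆ = 0 ∧ ⁅e 2, e 4⁆ = 0 ∧ ⁅e 2, e 5⁆ = 0 ∧
        ⁅e 3, e 4⁆ = 0 ∧ ⁅e 3, e 5⁆ = 0 ∧ ⁅e 4, e 5⁆ = 0) ∨
      (⁅e 0, e 1⁆ = -e 5 ∧ ⁅e 2, e 3⁆ = -e 5 ∧
        ⁅e 0, e 2⁆ = 0 ∧ ⁅e 0, e 3⁆ = 0 ∧ ⁅e 0, e 4⁆ = 0 ∧ ⁅e 0, e 5⁆ = 0 ∧
        ⁅e 1, e 2⁆ = 0 ∧ ⁅e 1, e 3⁆ = 0 ∧ ⁅e 1, e 4⁆ = 0 ∧ ⁅e 1, e 5⁆ = 0 ∧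
        ⁅e 2, e 4⁆ = 0 ∧ ⁅e 2, e 5⁆ = 0 ∧
        ⁅e 3, e 4⁆ = 0 ∧ ⁅e 3, e 5⁆ = 0 ∧ ⁅e 4, e 5⁆ = 0) := by
  classical
  set S : Submodule ℝ g :=
    ((LieModule.lowerCentralSeries ℝ g g 1 : LieSubmodule ℝ g g) : Submodule ℝ g) with hSdef
  have hSrank : finrank ℝ S = 1 := by
    have h1 := Submodule.finrank_quotient_add_finrank S
    have h2 : finrank ℝ (g ⧸ S) = 5 := by
      rw [← hb1]
      exact LinearEquiv.finrank_eq (Subspace.quotEquivAnnihilator S)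
    omega
  obtain ⟨v, hv0, hvgen⟩ := finrank_eq_one_iff'.mp hSrank
  set z : g := (v : g) with hzdef
  have hz0 : z ≠ 0 := fun h => hv0 (Subtype.ext h)
  have hgen : ∀ w : g, w ∈ S → ∃ c : ℝ, w = c • z := by
    intro w hw
    obtain ⟨c, hc⟩ := hvgen ⟨w, hw⟩
    refine ⟨c, ?_⟩
    have := congrArg (Subtype.val) hc
    simpa [hzdef] using this.symm
  have hmem : ∀ x y : g, ⁅x, y⁆ ∈ S := by
    intro x y
    show ⁅x, y⁆ ∈ LieModule.lowerCentralSeries ℝ g g 1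
    rw [LieModule.lowerCentralSeries_succ, LieModule.lowerCentralSeries_zero]
    exact LieSubmodule.lie_mem_lie (LieSubmodule.mem_top x) (LieSubmodule.mem_top y)
  obtain ⟨f0, hf0, -⟩ := Submodule.exists_dual_map_eq_bot_of_notMem
    (p := (⊥ : Submodule ℝ g)) (x := z) (by simpa using hz0) inferInstance
  set φ : Module.Dual ℝ g := (f0 z)⁻¹ • f0 with hφdef
  have hφz : φ z = 1 := by
    simp [hφdef, inv_mul_cancel₀ hf0]
  have hcent : ∀ x : g, ⁅x, z⁆ = 0 := by
    intro x
    obtain ⟨c, hc⟩ := hgen _ (hmem x z)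
    obtain ⟨n, hn⟩ := LieModule.isNilpotent_toEnd_of_isNilpotent ℝ g g x
    have hpow : ∀ m : ℕ, ((LieModule.toEnd ℝ g g x) ^ m) z = c ^ m • z := by
      intro m
      induction m with
      | zero => simp
      | succ m ih =>
        rw [pow_succ', Module.End.mul_apply, LieModule.toEnd_apply_apply, ih, lie_smul, hc,
          smul_smul, ← pow_succ]
    have h1 := hpow n
    rw [hn, LinearMap.zero_apply] at h1
    have hc0 : c = 0 := by
      rcases (smul_eq_zero.mp h1.symm) with h | h
      · exact (pow_eq_zero_iff'.mp h).1
      · exact absurd h hz0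
    rw [hc, hc0, zero_smul]
  have hB : ∀ x y : g, ⁅x, y⁆ = φ ⁅x, y⁆ • z := by
    intro x y
    obtain ⟨c, hc⟩ := hgen _ (hmem x y)
    rw [hc, map_smul, smul_eq_mul, hφz, mul_one]
  have hB0 : ∀ x y : g, φ ⁅x, y⁆ = 0 → ⁅x, y⁆ = 0 := by
    intro x y h; rw [hB, h, zero_smul]
  have hsk : ∀ x y : g, φ ⁅x, y⁆ = -φ ⁅y, x⁆ := by
    intro x y; rw [← lie_skew, map_neg]
  have hcφ : ∀ x : g, φ ⁅x, z⁆ = 0 := fun x => by rw [hcent, map_zero]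
  have hcφ' : ∀ x : g, φ ⁅z, x⁆ = 0 := fun x => by rw [hsk, hcφ, neg_zero]
  -- a nonzero pair
  have hab : ∃ a b : g, φ ⁅a, b⁆ ≠ 0 := by
    by_contra h
    push_neg at h
    exact hnab ⟨fun x y => hB0 x y (h x y)⟩
  obtain ⟨a, b, hab⟩ := hab
  set x1 : g := a with hx1def
  set x2 : g := (φ ⁅a, b⁆)⁻¹ • b with hx2def
  have h12 : φ ⁅x1, x2⁆ = 1 := by
    rw [hx2def, lie_smul, map_smul, smul_eq_mul, inv_mul_cancel₀ hab]
  have h21 : φ ⁅x2, x1⁆ = -1 := by rw [hsk, h12]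
  set fl : g → (g →ₗ[ℝ] ℝ) := fun x => φ ∘ₗ (LieAlgebra.ad ℝ g x) with hfldef
  have hflap : ∀ x y : g, fl x y = φ ⁅x, y⁆ := fun x y => rfl
  by_cases hc4 : ∃ p q : g, φ ⁅x1, p⁆ = 0 ∧ φ ⁅x2, p⁆ = 0 ∧ φ ⁅x1, q⁆ = 0 ∧ φ ⁅x2, q⁆ = 0 ∧
      φ ⁅p, q⁆ ≠ 0
  · obtain ⟨p, q, hp1, hp2, hq1, hq2, hpq⟩ := hc4
    set x3 : g := p with hx3def
    set x4 : g := (φ ⁅p, q⁆)⁻¹ • q with hx4def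
    have h34 : φ ⁅x3, x4⁆ = 1 := by
      rw [hx4def, lie_smul, map_smul, smul_eq_mul, inv_mul_cancel₀ hpq]
    have h43 : φ ⁅x4, x3⁆ = -1 := by rw [hsk, h34]
    have h13 : φ ⁅x1, x3⁆ = 0 := hp1
    have h23 : φ ⁅x2, x3⁆ = 0 := hp2
    have h14 : φ ⁅x1, x4⁆ = 0 := by rw [hx4def, lie_smul, map_smul, hq1, smul_zero]
    have h24 : φ ⁅x2, x4⁆ = 0 := by rw [hx4def, lie_smul, map_smul, hq2, smul_zero]
    have h31 : φ ⁅x3, x1⁆ = 0 := by rw [hsk, h13, neg_zero]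
    have h32 : φ ⁅x3, x2⁆ = 0 := by rw [hsk, h23, neg_zero]
    have h41 : φ ⁅x4, x1⁆ = 0 := by rw [hsk, h14, neg_zero]
    have h42 : φ ⁅x4, x2⁆ = 0 := by rw [hsk, h24, neg_zero]
    set f : Fin 5 → (g →ₗ[ℝ] ℝ) := ![fl x1, fl x2, fl x3, fl x4, φ] with hfdef
    set u : Fin 5 → g :=
      ![x2 - φ x2 • z, -x1 + φ x1 • z, x4 - φ x4 • z, -x3 + φ x3 • z, z] with hudef
    have hpair : ∀ i j, f i (u j) = if i = j then 1 else 0 := by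
      intro i j
      fin_cases i <;> fin_cases j <;>
        simp [hfdef, hudef, hflap, lie_sub, lie_add, lie_smul, lie_neg, lie_self,
          h12, h21, h34, h43, h13, h23, h14, h24, h31, h32, h41, h42, hcφ, hφz]
    have hker : finrank ℝ (LinearMap.ker (LinearMap.pi f)) = 1 := by
      rw [stmt17_ker_rank f u hpair, hdim]
    set w : Basis (Fin 1) ℝ (LinearMap.ker (LinearMap.pi f)) :=
      Module.finBasisOfFinrankEq ℝ _ hker with hwdef
    set V : Fin 6 → g := ![x1, x2, x3, x4, (w 0 : g), -z] with hVdef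
    have hwprop : φ ⁅x1, (w 0 : g)⁆ = 0 ∧ φ ⁅x2, (w 0 : g)⁆ = 0 ∧ φ ⁅x3, (w 0 : g)⁆ = 0 ∧
        φ ⁅x4, (w 0 : g)⁆ = 0 := by
      have hk := (w 0).2
      rw [LinearMap.mem_ker] at hk
      refine ⟨?_, ?_, ?_, ?_⟩
      · have := congrFun (congrArg (fun q => (q : Fin 5 → ℝ)) hk) 0
        simpa [LinearMap.pi_apply, hfdef, hflap] using this
      · have := congrFun (congrArg (fun q => (q : Fin 5 → ℝ)) hk) 1
        simpa [LinearMap.pi_apply, hfdef, hflap] using this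
      · have := congrFun (congrArg (fun q => (q : Fin 5 → ℝ)) hk) 2
        simpa [LinearMap.pi_apply, hfdef, hflap] using this
      · have := congrFun (congrArg (fun q => (q : Fin 5 → ℝ)) hk) 3
        simpa [LinearMap.pi_apply, hfdef, hflap] using this
    have hzmem : z ∈ Submodule.span ℝ (Set.range V) := by
      have h5 : -z ∈ Submodule.span ℝ (Set.range V) := Submodule.subset_span ⟨5, rfl⟩
      simpa using Submodule.neg_mem _ h5
    have hx1mem : x1 ∈ Submodule.span ℝ (Set.range V) := Submodule.subset_span ⟨0, rfl⟩
    have hx2mem : x2 ∈ Submodule.span ℝ (Set.range V) := Submodule.subset_span ⟨1, rfl⟩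
    have hx3mem : x3 ∈ Submodule.span ℝ (Set.range V) := Submodule.subset_span ⟨2, rfl⟩
    have hx4mem : x4 ∈ Submodule.span ℝ (Set.range V) := Submodule.subset_span ⟨3, rfl⟩
    have hspan : ⊤ ≤ Submodule.span ℝ (Set.range V) := by
      refine stmt17_span f u hpair _ ?_ ?_
      · intro j
        fin_cases j
        · exact Submodule.sub_mem _ hx2mem (Submodule.smul_mem _ _ hzmem)
        · exact Submodule.add_mem _ (Submodule.neg_mem _ hx1mem) (Submodule.smul_mem _ _ hzmem)
        · exact Submodule.sub_mem _ hx4mem (Submodule.smul_mem _ _ hzmem)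
        · exact Submodule.add_mem _ (Submodule.neg_mem _ hx3mem) (Submodule.smul_mem _ _ hzmem)
        · exact hzmem
      · intro y hy
        refine stmt17_ker_span f w _ ?_ y hy
        intro i
        fin_cases i
        · exact ⟨4, rfl⟩
    refine ⟨basisOfTopLeSpanOfCardEqFinrank V hspan (by simp [hdim]), Or.inr ?_⟩
    rw [coe_basisOfTopLeSpanOfCardEqFinrank]
    have e0 : V 0 = x1 := rfl
    have e1 : V 1 = x2 := rfl
    have e2 : V 2 = x3 := rfl
    have e3 : V 3 = x4 := rfl
    have e4 : V 4 = (w 0 : g) := rfl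
    have e5 : V 5 = -z := rfl
    rw [e0, e1, e2, e3, e4, e5]
    refine ⟨?_, ?_, ?_, ?_, ?_, ?_, ?_, ?_, ?_, ?_, ?_, ?_, ?_, ?_, ?_⟩
    · rw [hB _ _, h12, one_smul, neg_neg]
    · rw [hB _ _, h34, one_smul, neg_neg]
    · exact hB0 _ _ h13
    · exact hB0 _ _ h14
    · exact hB0 _ _ hwprop.1
    · rw [lie_neg, hcent, neg_zero]
    · exact hB0 _ _ h23
    · exact hB0 _ _ h24
    · exact hB0 _ _ hwprop.2.1
    · rw [lie_neg, hcent, neg_zero]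
    · exact hB0 _ _ hwprop.2.2.1
    · rw [lie_neg, hcent, neg_zero]
    · exact hB0 _ _ hwprop.2.2.2
    · rw [lie_neg, hcent, neg_zero]
    · rw [lie_neg, hcent, neg_zero]
  · -- abelian complement case : (0,0,0,0,0,12)
    push_neg at hc4
    set f : Fin 3 → (g →ₗ[ℝ] ℝ) := ![fl x1, fl x2, φ] with hfdef
    set u : Fin 3 → g := ![x2 - φ x2 • z, -x1 + φ x1 • z, z] with hudef
    have hpair : ∀ i j, f i (u j) = if i = j then 1 else 0 := by
      intro i j
      fin_cases i <;> fin_cases j <;>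
        simp [hfdef, hudef, hflap, lie_sub, lie_add, lie_smul, lie_neg, lie_self,
          h12, h21, hcφ, hφz]
    have hker : finrank ℝ (LinearMap.ker (LinearMap.pi f)) = 3 := by
      rw [stmt17_ker_rank f u hpair, hdim]
    set w : Basis (Fin 3) ℝ (LinearMap.ker (LinearMap.pi f)) :=
      Module.finBasisOfFinrankEq ℝ _ hker with hwdef
    set V : Fin 6 → g := ![x1, x2, (w 0 : g), (w 1 : g), (w 2 : g), -z] with hVdef
    have hwprop : ∀ i : Fin 3, φ ⁅x1, (w i : g)⁆ = 0 ∧ φ ⁅x2, (w i : g)⁆ = 0 ∧ φ (w i : g) = 0 := by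
      intro i
      have hk := (w i).2
      rw [LinearMap.mem_ker] at hk
      refine ⟨?_, ?_, ?_⟩
      · have := congrFun (congrArg (fun q => (q : Fin 3 → ℝ)) hk) 0
        simpa [LinearMap.pi_apply, hfdef, hflap] using this
      · have := congrFun (congrArg (fun q => (q : Fin 3 → ℝ)) hk) 1
        simpa [LinearMap.pi_apply, hfdef, hflap] using this
      · have := congrFun (congrArg (fun q => (q : Fin 3 → ℝ)) hk) 2
        simpa [LinearMap.pi_apply, hfdef] using this
    have hzmem : z ∈ Submodule.span ℝ (Set.range V) := by
      have h5 : -z ∈ Submodule.span ℝ (Set.range V) := Submodule.subset_span ⟨5, rfl⟩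
      simpa using Submodule.neg_mem _ h5
    have hx1mem : x1 ∈ Submodule.span ℝ (Set.range V) := Submodule.subset_span ⟨0, rfl⟩
    have hx2mem : x2 ∈ Submodule.span ℝ (Set.range V) := Submodule.subset_span ⟨1, rfl⟩
    have hspan : ⊤ ≤ Submodule.span ℝ (Set.range V) := by
      refine stmt17_span f u hpair _ ?_ ?_
      · intro j
        fin_cases j
        · exact Submodule.sub_mem _ hx2mem (Submodule.smul_mem _ _ hzmem)
        · exact Submodule.add_mem _ (Submodule.neg_mem _ hx1mem) (Submodule.smul_mem _ _ hzmem)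
        · exact hzmem
      · intro y hy
        refine stmt17_ker_span f w _ ?_ y hy
        intro i
        fin_cases i
        · exact ⟨2, rfl⟩
        · exact ⟨3, rfl⟩
        · exact ⟨4, rfl⟩
    refine ⟨basisOfTopLeSpanOfCardEqFinrank V hspan (by simp [hdim]), Or.inl ?_⟩
    rw [coe_basisOfTopLeSpanOfCardEqFinrank]
    have e0 : V 0 = x1 := rfl
    have e1 : V 1 = x2 := rfl
    have e2 : V 2 = (w 0 : g) := rfl
    have e3 : V 3 = (w 1 : g) := rfl
    have e4 : V 4 = (w 2 : g) := rfl
    have e5 : V 5 = -z := rfl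
    rw [e0, e1, e2, e3, e4, e5]
    refine ⟨?_, ?_, ?_, ?_, ?_, ?_, ?_, ?_, ?_, ?_, ?_, ?_, ?_, ?_, ?_⟩
    · rw [hB _ _, h12, one_smul, neg_neg]
    · exact hB0 _ _ (hwprop 0).1
    · exact hB0 _ _ (hwprop 1).1
    · exact hB0 _ _ (hwprop 2).1
    · rw [lie_neg, hcent, neg_zero]
    · exact hB0 _ _ (hwprop 0).2.1
    · exact hB0 _ _ (hwprop 1).2.1
    · exact hB0 _ _ (hwprop 2).2.1
    · rw [lie_neg, hcent, neg_zero]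
    · exact hB0 _ _ (hc4 _ _ (hwprop 0).1 (hwprop 0).2.1 (hwprop 1).1 (hwprop 1).2.1)
    · exact hB0 _ _ (hc4 _ _ (hwprop 0).1 (hwprop 0).2.1 (hwprop 2).1 (hwprop 2).2.1)
    · rw [lie_neg, hcent, neg_zero]
    · exact hB0 _ _ (hc4 _ _ (hwprop 1).1 (hwprop 1).2.1 (hwprop 2).1 (hwprop 2).2.1)
    · rw [lie_neg, hcent, neg_zero]
    · rw [lie_neg, hcent, neg_zero]
end

section
/- Let g be a 6-dimensional real nilpotent Lie algebra with an integrable almost-complex structure J such that the space V₁ = ker(d: g* → Λ²g*) of closed 1-forms has dimension 5. Then J is abelian, i.e. [JX,JY] = [X,Y] for all X,Y ∈ g. -/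
/-- If a 6-dimensional real nilpotent Lie algebra has an
integrable almost-complex structure `J` and its space of closed 1-forms
(the annihilator of `[g,g]`) is 5-dimensional, then `J` is abelian:
`⁅JX, JY⁆ = ⁅X, Y⁆` for all `X, Y`. -/
theorem stmt18 {g : Type*} [LieRing g] [LieAlgebra ℝ g] [FiniteDimensional ℝ g]
    [LieRing.IsNilpotent g] (hdim : Module.finrank ℝ g = 6)
    (J : g →ₗ[ℝ] g) (hJ2 : ∀ X : g, J (J X) = -X)
    (hint : ∀ X Y : g, ⁅J X, J Y⁆ = ⁅X, Y⁆ + J ⁅J X, Y⁆ + J ⁅X, J Y⁆)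
    (hb1 : Module.finrank ℝ
      ↥(Submodule.dualAnnihilator
        ((LieModule.lowerCentralSeries ℝ g g 1 : LieSubmodule ℝ g g) :
          Submodule ℝ g)) = 5) :
    ∀ X Y : g, ⁅J X, J Y⁆ = ⁅X, Y⁆ := by
  set C : Submodule ℝ g :=
    ((LieModule.lowerCentralSeries ℝ g g 1 : LieSubmodule ℝ g g) : Submodule ℝ g) with hC
  -- brackets lie in C
  have hmem : ∀ X Y : g, ⁅X, Y⁆ ∈ C := by
    intro X Y
    have h1 : (LieModule.lowerCentralSeries ℝ g g 1 : LieSubmodule ℝ g g)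
        = ⁅(⊤ : LieIdeal ℝ g), (⊤ : LieSubmodule ℝ g g)⁆ := by
      rw [LieModule.lowerCentralSeries_succ, LieModule.lowerCentralSeries_zero]
    have h2 : ⁅X, Y⁆ ∈ (LieModule.lowerCentralSeries ℝ g g 1 : LieSubmodule ℝ g g) := by
      rw [h1]
      exact LieSubmodule.lie_mem_lie (LieSubmodule.mem_top _) (LieSubmodule.mem_top _)
    exact h2
  -- C is 1-dimensional
  have hdimC : Module.finrank ℝ C = 1 := by
    have h1 : Module.finrank ℝ C.dualAnnihilator = Module.finrank ℝ (g ⧸ C) :=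
      (LinearEquiv.finrank_eq (Subspace.quotEquivAnnihilator C)).symm
    have h2 := Submodule.finrank_quotient_add_finrank C
    omega
  -- get a generator
  obtain ⟨⟨Z, hZC⟩, hZ0, hZgen⟩ := finrank_eq_one_iff'.mp hdimC
  have hZne : Z ≠ 0 := by
    intro h
    exact hZ0 (by ext; simpa using h)
  -- JZ not a multiple of Z
  have hJZ : ∀ t : ℝ, J Z ≠ t • Z := by
    intro t ht
    have : J (J Z) = (t * t) • Z := by rw [ht, map_smul, ht, smul_smul]
    rw [hJ2] at this
    have h3 : (t * t + 1) • Z = 0 := by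
      rw [add_smul, one_smul, ← this]; abel
    rcases smul_eq_zero.mp h3 with h | h
    · nlinarith
    · exact hZne h
  intro X Y
  obtain ⟨c, hc⟩ := hZgen ⟨⁅J X, Y⁆ + ⁅X, J Y⁆, C.add_mem (hmem _ _) (hmem _ _)⟩
  have hc' : c • Z = ⁅J X, Y⁆ + ⁅X, J Y⁆ := congrArg Subtype.val hc
  obtain ⟨d, hd⟩ := hZgen ⟨⁅J X, J Y⁆ - ⁅X, Y⁆, C.sub_mem (hmem _ _) (hmem _ _)⟩
  have hd' : d • Z = ⁅J X, J Y⁆ - ⁅X, Y⁆ := congrArg Subtype.val hd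
  have hkey : ⁅J X, J Y⁆ - ⁅X, Y⁆ = c • J Z := by
    rw [← map_smul, hc', map_add, hint X Y]; abel
  have hcd : d • Z = c • J Z := by rw [hd', hkey]
  have hc0 : c = 0 := by
    by_contra h
    exact hJZ (c⁻¹ * d) (by rw [mul_smul, hcd, inv_smul_smul₀ h])
  have : ⁅J X, J Y⁆ - ⁅X, Y⁆ = 0 := by rw [hkey, hc0, zero_smul]
  linear_combination (norm := abel) this
end
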